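/- arXiv:math/0509529 — 12 statements merged into one kernel-verified Lean document; each statement's English description precedes it below -/
import Mathlib

section
/- The set of triples (a,b,c) of positive integers satisfying a² + b² + c² = 3abc is exactly the smallest set S of triples of positive integers such that (1,1,1) ∈ S and S is closed under the three mutations (a,b,c) ↦ (3bc − a, b, c), (a,b,c) ↦ (a, 3ac − b, c), and (a,b,c) ↦ (a, b, 3ab − c). -/
/-- Ordered descent: if `m` is the largest coordinate of a Markov triple
`(m, x, y)` with `y ≤ x ≤ m` and `m > 1`, then mutating `m` gives a smaller
positive value. -/
lemma markov_descent' (m x y : ℤ) (hy : 0 < y) (hyx : y ≤ x) (hxm : x ≤ m)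
    (hm : 1 < m) (heq : m ^ 2 + x ^ 2 + y ^ 2 = 3 * m * x * y) :
    0 < 3 * x * y - m ∧ 3 * x * y - m < m := by
  have hx : 0 < x := lt_of_lt_of_le hy hyx
  have hprod : m * (3 * x * y - m) = x ^ 2 + y ^ 2 := by linear_combination -heq
  constructor
  · by_contra h
    push_neg at h
    nlinarith [mul_pos hx hy]
  · by_contra h
    push_neg at h
    -- 2m ≤ 3xy
    have h1 : m ^ 2 ≤ x ^ 2 + y ^ 2 := by nlinarith
    have hy1 : y ≤ 1 := by nlinarith
    have hy1' : y = 1 := le_antisymm hy1 hy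
    subst hy1'
    have hxm' : m ≤ x := by nlinarith
    have hxe : m = x := le_antisymm hxm' hxm
    subst hxe
    nlinarith

/-- Descent without ordering between the two smaller coordinates. -/
lemma markov_descent (m x y : ℤ) (hx : 0 < x) (hy : 0 < y) (hxm : x ≤ m)
    (hym : y ≤ m) (hm : 1 < m) (heq : m ^ 2 + x ^ 2 + y ^ 2 = 3 * m * x * y) :
    0 < 3 * x * y - m ∧ 3 * x * y - m < m := by
  rcases le_total y x with h | h
  · exact markov_descent' m x y hy h hxm hm heq
  · have heq' : m ^ 2 + y ^ 2 + x ^ 2 = 3 * m * y * x := by linear_combination heq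
    have := markov_descent' m y x hx h hym hm heq'
    rw [show 3 * y * x = 3 * x * y by ring] at this
    exact this

lemma markov_mem (S : Set (ℤ × ℤ × ℤ))
    (h111 : (1, 1, 1) ∈ S)
    (hS1 : ∀ a b c : ℤ, (a, b, c) ∈ S → (3 * b * c - a, b, c) ∈ S)
    (hS2 : ∀ a b c : ℤ, (a, b, c) ∈ S → (a, 3 * a * c - b, c) ∈ S)
    (hS3 : ∀ a b c : ℤ, (a, b, c) ∈ S → (a, b, 3 * a * b - c) ∈ S) :
    ∀ n : ℕ, ∀ a b c : ℤ, 0 < a → 0 < b → 0 < c →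
      a ^ 2 + b ^ 2 + c ^ 2 = 3 * a * b * c → a + b + c ≤ (n : ℤ) → (a, b, c) ∈ S := by
  intro n
  induction n with
  | zero => intro a b c ha hb hc _ hsum; exfalso; push_cast at hsum; linarith
  | succ n ih =>
    intro a b c ha hb hc heq hsum
    by_cases h111' : a = 1 ∧ b = 1 ∧ c = 1
    · obtain ⟨rfl, rfl, rfl⟩ := h111'; exact h111
    · rcases le_total b a with hba | hba
      · rcases le_total c a with hca | hca
        · -- a is max
          have ha1 : 1 < a := by
            rcases lt_or_ge 1 a with h | h
            · exact h
            · exfalso; apply h111'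
              have : a = 1 := le_antisymm h ha
              subst this
              exact ⟨rfl, le_antisymm hba hb, le_antisymm hca hc⟩
          obtain ⟨hp, hlt⟩ := markov_descent a b c hb hc hba hca ha1 heq
          have heq' : (3 * b * c - a) ^ 2 + b ^ 2 + c ^ 2 =
              3 * (3 * b * c - a) * b * c := by linear_combination heq
          have hsum' : (3 * b * c - a) + b + c ≤ (n : ℤ) := by
            push_cast at hsum ⊢; linarith
          have hmem := ih (3 * b * c - a) b c hp hb hc heq' hsum'
          have := hS1 (3 * b * c - a) b c hmem
          rwa [show 3 * b * c - (3 * b * c - a) = a by ring] at this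
        · -- c is max (c ≥ a ≥ b)
          have hbc : b ≤ c := le_trans hba hca
          have hc1 : 1 < c := by
            rcases lt_or_ge 1 c with h | h
            · exact h
            · exfalso; apply h111'
              have hc' : c = 1 := le_antisymm h hc
              subst hc'
              exact ⟨le_antisymm hca ha, le_antisymm hbc hb, rfl⟩
          have heqc : c ^ 2 + a ^ 2 + b ^ 2 = 3 * c * a * b := by
            linear_combination heq
          obtain ⟨hp, hlt⟩ := markov_descent c a b ha hb hca hbc hc1 heqc
          have heq' : a ^ 2 + b ^ 2 + (3 * a * b - c) ^ 2 =
              3 * a * b * (3 * a * b - c) := by linear_combination heq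
          have hsum' : a + b + (3 * a * b - c) ≤ (n : ℤ) := by
            push_cast at hsum ⊢; linarith
          have hmem := ih a b (3 * a * b - c) ha hb hp heq' hsum'
          have := hS3 a b (3 * a * b - c) hmem
          rwa [show 3 * a * b - (3 * a * b - c) = c by ring] at this
      · rcases le_total c b with hcb | hcb
        · -- b is max
          have hb1 : 1 < b := by
            rcases lt_or_ge 1 b with h | h
            · exact h
            · exfalso; apply h111'
              have hb' : b = 1 := le_antisymm h hb
              subst hb'
              exact ⟨le_antisymm hba ha, rfl, le_antisymm hcb hc⟩
          have heqb : b ^ 2 + a ^ 2 + c ^ 2 = 3 * b * a * c := by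
            linear_combination heq
          obtain ⟨hp, hlt⟩ := markov_descent b a c ha hc hba hcb hb1 heqb
          have heq' : a ^ 2 + (3 * a * c - b) ^ 2 + c ^ 2 =
              3 * a * (3 * a * c - b) * c := by linear_combination heq
          have hsum' : a + (3 * a * c - b) + c ≤ (n : ℤ) := by
            push_cast at hsum ⊢; linarith
          have hmem := ih a (3 * a * c - b) c ha hp hc heq' hsum'
          have := hS2 a (3 * a * c - b) c hmem
          rwa [show 3 * a * c - (3 * a * c - b) = b by ring] at this
        · -- c is max (c ≥ b ≥ a)
          have hac : a ≤ c := le_trans hba hcb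
          have hc1 : 1 < c := by
            rcases lt_or_ge 1 c with h | h
            · exact h
            · exfalso; apply h111'
              have hc' : c = 1 := le_antisymm h hc
              subst hc'
              exact ⟨le_antisymm hac ha, le_antisymm hcb hb, rfl⟩
          have heqc : c ^ 2 + a ^ 2 + b ^ 2 = 3 * c * a * b := by
            linear_combination heq
          obtain ⟨hp, hlt⟩ := markov_descent c a b ha hb hac hcb hc1 heqc
          have heq' : a ^ 2 + b ^ 2 + (3 * a * b - c) ^ 2 =
              3 * a * b * (3 * a * b - c) := by linear_combination heq
          have hsum' : a + b + (3 * a * b - c) ≤ (n : ℤ) := by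
            push_cast at hsum ⊢; linarith
          have hmem := ih a b (3 * a * b - c) ha hb hp heq' hsum'
          have := hS3 a b (3 * a * b - c) hmem
          rwa [show 3 * a * b - (3 * a * b - c) = c by ring] at this

/-- The set of Markov triples (positive integer solutions of
`a² + b² + c² = 3abc`) is exactly the smallest set of triples of positive
integers containing `(1,1,1)` and closed under the three mutations. -/
theorem stmt_1 :
    {p : ℤ × ℤ × ℤ | 0 < p.1 ∧ 0 < p.2.1 ∧ 0 < p.2.2 ∧
        p.1 ^ 2 + p.2.1 ^ 2 + p.2.2 ^ 2 = 3 * p.1 * p.2.1 * p.2.2} =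
      ⋂₀ {S : Set (ℤ × ℤ × ℤ) |
        (∀ p ∈ S, 0 < p.1 ∧ 0 < p.2.1 ∧ 0 < p.2.2) ∧
        (1, 1, 1) ∈ S ∧
        (∀ a b c : ℤ, (a, b, c) ∈ S → (3 * b * c - a, b, c) ∈ S) ∧
        (∀ a b c : ℤ, (a, b, c) ∈ S → (a, 3 * a * c - b, c) ∈ S) ∧
        (∀ a b c : ℤ, (a, b, c) ∈ S → (a, b, 3 * a * b - c) ∈ S)} := by
  apply Set.Subset.antisymm
  · rintro ⟨a, b, c⟩ ⟨ha, hb, hc, heq⟩ S ⟨hpos, h111, hS1, hS2, hS3⟩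
    have hsum : a + b + c ≤ ((a + b + c).toNat : ℤ) := by
      rw [Int.toNat_of_nonneg (by linarith)]
    exact markov_mem S h111 hS1 hS2 hS3 (a + b + c).toNat a b c ha hb hc heq hsum
  · intro p hp
    refine hp {q : ℤ × ℤ × ℤ | 0 < q.1 ∧ 0 < q.2.1 ∧ 0 < q.2.2 ∧
        q.1 ^ 2 + q.2.1 ^ 2 + q.2.2 ^ 2 = 3 * q.1 * q.2.1 * q.2.2} ?_
    refine ⟨fun q hq => ⟨hq.1, hq.2.1, hq.2.2.1⟩, ⟨by norm_num, by norm_num, by norm_num, by norm_num⟩, ?_, ?_, ?_⟩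
    · rintro a b c ⟨ha, hb, hc, heq⟩
      refine ⟨?_, hb, hc, by dsimp at heq ⊢; linear_combination heq⟩
      dsimp at *
      nlinarith [mul_pos hb hc]
    · rintro a b c ⟨ha, hb, hc, heq⟩
      refine ⟨ha, ?_, hc, by dsimp at heq ⊢; linear_combination heq⟩
      dsimp at *
      nlinarith [mul_pos ha hc]
    · rintro a b c ⟨ha, hb, hc, heq⟩
      refine ⟨ha, hb, ?_, by dsimp at heq ⊢; linear_combination heq⟩
      dsimp at *
      nlinarith [mul_pos ha hb]
end

section
/- The set of triples (a,b,c) of positive integers satisfying a² + b² + 2c² = 4abc is exactly the smallest set S of triples of positive integers such that (1,1,1) ∈ S and S is closed under the three mutations (a,b,c) ↦ (4bc − a, b, c), (a,b,c) ↦ (a, 4ac − b, c), and (a,b,c) ↦ (a, b, 2ab − c). -/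
-- minimality lemma, assuming b ≤ a
lemma aux_min (a b c : ℤ) (ha : 0 < a) (hb : 0 < b) (hc : 0 < c)
    (heq : a ^ 2 + b ^ 2 + 2 * c ^ 2 = 4 * a * b * c)
    (h1 : a ≤ 2 * b * c) (h3 : c ≤ a * b) (hba : b ≤ a) :
    a = 1 ∧ b = 1 ∧ c = 1 := by
  have ha2 : a ^ 2 ≤ b ^ 2 + 2 * c ^ 2 := by
    nlinarith [mul_le_mul_of_nonneg_left h1 ha.le]
  have hc2 : 2 * c ^ 2 ≤ a ^ 2 + b ^ 2 := by
    nlinarith [mul_le_mul_of_nonneg_left h3 hc.le]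
  have habc : b * c ≤ a := by nlinarith
  have hc1 : c = 1 := by
    by_contra h
    have hc2' : 2 ≤ c := by omega
    have hb1 : b = 1 := by
      by_contra hb'
      have hb2 : 2 ≤ b := by omega
      nlinarith [mul_le_mul habc habc (by positivity) ha.le]
    subst hb1
    have hca : c ≤ a := by linarith [h3]
    have hax : a ≤ 2 * c := by linarith [h1]
    nlinarith [mul_nonneg (sub_nonneg.2 hca) (sub_nonneg.2 hax)]
  subst hc1
  have hab : a = b := by
    by_contra h
    have : b + 1 ≤ a := by omega
    nlinarith
  subst hab
  have : a = 1 := by nlinarith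
  exact ⟨this, this, rfl⟩

lemma min_lemma (a b c : ℤ) (ha : 0 < a) (hb : 0 < b) (hc : 0 < c)
    (heq : a ^ 2 + b ^ 2 + 2 * c ^ 2 = 4 * a * b * c)
    (h1 : a ≤ 2 * b * c) (h2 : b ≤ 2 * a * c) (h3 : c ≤ a * b) :
    a = 1 ∧ b = 1 ∧ c = 1 := by
  rcases le_total b a with h | h
  · exact aux_min a b c ha hb hc heq h1 h3 h
  · have := aux_min b a c hb ha hc (by linarith) (by linarith [h2]) (by linarith [h3]) h
    exact ⟨this.2.1, this.1, this.2.2⟩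

lemma descent : ∀ n : ℕ, ∀ a b c : ℤ, (a + b + c).toNat ≤ n →
    0 < a → 0 < b → 0 < c → a ^ 2 + b ^ 2 + 2 * c ^ 2 = 4 * a * b * c →
    ∀ S : Set (ℤ × ℤ × ℤ),
      ((∀ p ∈ S, 0 < p.1 ∧ 0 < p.2.1 ∧ 0 < p.2.2) ∧
        (1, 1, 1) ∈ S ∧
        (∀ a b c : ℤ, (a, b, c) ∈ S → (4 * b * c - a, b, c) ∈ S) ∧
        (∀ a b c : ℤ, (a, b, c) ∈ S → (a, 4 * a * c - b, c) ∈ S) ∧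
        (∀ a b c : ℤ, (a, b, c) ∈ S → (a, b, 2 * a * b - c) ∈ S)) →
      (a, b, c) ∈ S := by
  intro n
  induction n with
  | zero => intro a b c hn ha hb hc _ _ _; omega
  | succ n ih =>
    intro a b c hn ha hb hc heq S hS
    obtain ⟨hpos, hone, hm1, hm2, hm3⟩ := hS
    by_cases hmin : a ≤ 2 * b * c ∧ b ≤ 2 * a * c ∧ c ≤ a * b
    · obtain ⟨e1, e2, e3⟩ := min_lemma a b c ha hb hc heq hmin.1 hmin.2.1 hmin.2.2
      rw [e1, e2, e3]; exact hone
    · push_neg at hmin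
      rcases lt_or_ge (2 * b * c) a with h | h
      · -- mutate a
        have ha' : 0 < 4 * b * c - a := by
          rcases lt_or_ge 0 (4 * b * c - a) with h' | h'
          · exact h'
          · nlinarith [mul_nonpos_of_nonneg_of_nonpos ha.le h', mul_pos hb hb, mul_pos hc hc]
        have heq' : (4 * b * c - a) ^ 2 + b ^ 2 + 2 * c ^ 2 = 4 * (4 * b * c - a) * b * c := by
          linear_combination heq
        have hlt : 4 * b * c - a < a := by linarith
        have hS' := ih (4 * b * c - a) b c (by omega) ha' hb hc heq' S
          ⟨hpos, hone, hm1, hm2, hm3⟩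
        have := hm1 _ _ _ hS'
        have key : 4 * b * c - (4 * b * c - a) = a := by ring
        rwa [key] at this
      · rcases lt_or_ge (2 * a * c) b with h2 | h2
        · -- mutate b
          have hb' : 0 < 4 * a * c - b := by
            rcases lt_or_ge 0 (4 * a * c - b) with h' | h'
            · exact h'
            · nlinarith [mul_nonpos_of_nonneg_of_nonpos hb.le h', mul_pos ha ha, mul_pos hc hc]
          have heq' : a ^ 2 + (4 * a * c - b) ^ 2 + 2 * c ^ 2 = 4 * a * (4 * a * c - b) * c := by
            linear_combination heq
          have hlt : 4 * a * c - b < b := by linarith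
          have hS' := ih a (4 * a * c - b) c (by omega) ha hb' hc heq' S
            ⟨hpos, hone, hm1, hm2, hm3⟩
          have := hm2 _ _ _ hS'
          have key : 4 * a * c - (4 * a * c - b) = b := by ring
          rwa [key] at this
        · -- mutate c
          have h3 : a * b < c := by
            rcases hmin (by linarith) (by linarith) with h3
            exact h3
          have hc' : 0 < 2 * a * b - c := by
            rcases lt_or_ge 0 (2 * a * b - c) with h' | h'
            · exact h'
            · nlinarith [mul_nonpos_of_nonneg_of_nonpos hc.le h', mul_pos ha ha, mul_pos hb hb]
          have heq' : a ^ 2 + b ^ 2 + 2 * (2 * a * b - c) ^ 2 = 4 * a * b * (2 * a * b - c) := by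
            linear_combination heq
          have hlt : 2 * a * b - c < c := by linarith
          have hS' := ih a b (2 * a * b - c) (by omega) ha hb hc' heq' S
            ⟨hpos, hone, hm1, hm2, hm3⟩
          have := hm3 _ _ _ hS'
          have key : 2 * a * b - (2 * a * b - c) = c := by ring
          rwa [key] at this

/-- The set of positive integer solutions of `a² + b² + 2c² = 4abc` is exactly
the smallest set of triples of positive integers containing `(1,1,1)` and
closed under the three mutations. -/
theorem stmt_2 :
    {p : ℤ × ℤ × ℤ | 0 < p.1 ∧ 0 < p.2.1 ∧ 0 < p.2.2 ∧
        p.1 ^ 2 + p.2.1 ^ 2 + 2 * p.2.2 ^ 2 = 4 * p.1 * p.2.1 * p.2.2} =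
      ⋂₀ {S : Set (ℤ × ℤ × ℤ) |
        (∀ p ∈ S, 0 < p.1 ∧ 0 < p.2.1 ∧ 0 < p.2.2) ∧
        (1, 1, 1) ∈ S ∧
        (∀ a b c : ℤ, (a, b, c) ∈ S → (4 * b * c - a, b, c) ∈ S) ∧
        (∀ a b c : ℤ, (a, b, c) ∈ S → (a, 4 * a * c - b, c) ∈ S) ∧
        (∀ a b c : ℤ, (a, b, c) ∈ S → (a, b, 2 * a * b - c) ∈ S)} := by
  apply Set.Subset.antisymm
  · rintro ⟨a, b, c⟩ ⟨ha, hb, hc, heq⟩ S hS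
    exact descent (a + b + c).toNat a b c le_rfl ha hb hc heq S hS
  · intro p hp
    refine hp {p : ℤ × ℤ × ℤ | 0 < p.1 ∧ 0 < p.2.1 ∧ 0 < p.2.2 ∧
        p.1 ^ 2 + p.2.1 ^ 2 + 2 * p.2.2 ^ 2 = 4 * p.1 * p.2.1 * p.2.2}
      ⟨fun q hq => ⟨hq.1, hq.2.1, hq.2.2.1⟩, ⟨by norm_num, by norm_num, by norm_num, by norm_num⟩,
        ?_, ?_, ?_⟩
    · rintro a b c ⟨ha, hb, hc, heq⟩
      have ha' : 0 < 4 * b * c - a := by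
        rcases lt_or_ge 0 (4 * b * c - a) with h' | h'
        · exact h'
        · nlinarith [mul_nonpos_of_nonneg_of_nonpos ha.le h', mul_pos hb hb, mul_pos hc hc]
      exact ⟨ha', hb, hc, by linear_combination heq⟩
    · rintro a b c ⟨ha, hb, hc, heq⟩
      have hb' : 0 < 4 * a * c - b := by
        rcases lt_or_ge 0 (4 * a * c - b) with h' | h'
        · exact h'
        · nlinarith [mul_nonpos_of_nonneg_of_nonpos hb.le h', mul_pos ha ha, mul_pos hc hc]
      exact ⟨ha, hb', hc, by linear_combination heq⟩
    · rintro a b c ⟨ha, hb, hc, heq⟩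
      have hc' : 0 < 2 * a * b - c := by
        rcases lt_or_ge 0 (2 * a * b - c) with h' | h'
        · exact h'
        · nlinarith [mul_nonpos_of_nonneg_of_nonpos hc.le h', mul_pos ha ha, mul_pos hb hb]
      exact ⟨ha, hb, hc', by linear_combination heq⟩
end

section
/- The set of triples (a,b,c) of positive integers satisfying a² + b² + 5c² = 5abc is exactly the smallest set S of triples of positive integers such that (1,2,1) ∈ S and (2,1,1) ∈ S and S is closed under the three mutations (a,b,c) ↦ (5bc − a, b, c), (a,b,c) ↦ (a, 5ac − b, c), and (a,b,c) ↦ (a, b, ab − c). -/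
private lemma mutA' {a b c : ℤ} (ha : 0 < a) (hb : 0 < b) (hc : 0 < c)
    (h : a ^ 2 + b ^ 2 + 5 * c ^ 2 = 5 * a * b * c) :
    0 < 5 * b * c - a ∧
      (5 * b * c - a) ^ 2 + b ^ 2 + 5 * c ^ 2 = 5 * (5 * b * c - a) * b * c := by
  constructor
  · nlinarith [mul_pos hb hb, mul_pos hc hc]
  · linear_combination h

private lemma mutB' {a b c : ℤ} (ha : 0 < a) (hb : 0 < b) (hc : 0 < c)
    (h : a ^ 2 + b ^ 2 + 5 * c ^ 2 = 5 * a * b * c) :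
    0 < 5 * a * c - b ∧
      a ^ 2 + (5 * a * c - b) ^ 2 + 5 * c ^ 2 = 5 * a * (5 * a * c - b) * c := by
  constructor
  · nlinarith [mul_pos ha ha, mul_pos hc hc]
  · linear_combination h

private lemma mutC' {a b c : ℤ} (ha : 0 < a) (hb : 0 < b) (hc : 0 < c)
    (h : a ^ 2 + b ^ 2 + 5 * c ^ 2 = 5 * a * b * c) :
    0 < a * b - c ∧
      a ^ 2 + b ^ 2 + 5 * (a * b - c) ^ 2 = 5 * a * b * (a * b - c) := by
  constructor
  · nlinarith [mul_pos ha ha, mul_pos hb hb]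
  · linear_combination h

/-- no solution has `a = b` -/
private lemma ne_ab {a b c : ℤ} (ha : 0 < a) (hb : 0 < b) (hc : 0 < c)
    (h : a ^ 2 + b ^ 2 + 5 * c ^ 2 = 5 * a * b * c) : a ≠ b := by
  rintro rfl
  have h1 : 25 * c ^ 2 = (5 * c - 2) * (5 * a ^ 2) := by linear_combination 5 * h
  have h2 : (5 * c - 2) ∣ (4 : ℤ) := by
    have d1 : (5 * c - 2) ∣ 25 * c ^ 2 := ⟨5 * a ^ 2, h1⟩
    have d2 : (5 * c - 2) ∣ (5 * c - 2) * (5 * c + 2) := Dvd.intro _ rfl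
    have d3 : (25 : ℤ) * c ^ 2 - (5 * c - 2) * (5 * c + 2) = 4 := by ring
    calc (5 * c - 2) ∣ 25 * c ^ 2 - (5 * c - 2) * (5 * c + 2) := dvd_sub d1 d2
      _ = 4 := d3
  have h3 : 5 * c - 2 ≤ 4 := Int.le_of_dvd (by norm_num) h2
  have hc1 : c = 1 := by omega
  subst hc1
  norm_num at h2

/-- descent, asymmetric version with `b < a` -/
private lemma descent_aux {a b c : ℤ} (ha : 0 < a) (hb : 0 < b) (hc : 0 < c)
    (hba : b < a) (h : a ^ 2 + b ^ 2 + 5 * c ^ 2 = 5 * a * b * c) :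
    (a = 2 ∧ b = 1 ∧ c = 1) ∨ 5 * b * c < 2 * a ∨ a * b < 2 * c := by
  rcases lt_or_ge (5 * c ^ 2) (a ^ 2) with hA | hC
  · -- case A : a is dominant, the a-mutation decreases
    right; left
    by_contra hcon
    push_neg at hcon
    -- hcon : 2 * a ≤ 5 * b * c
    have ha2c : 2 * c < a := by nlinarith [mul_pos hc hc]
    rcases le_or_gt (5 * c ^ 2) (b ^ 2) with hb2 | hb2
    · have key : 0 < (a - b) * (5 * b * c - a - b) :=
        mul_pos (by linarith) (by linarith)
      nlinarith [key, mul_nonneg (sq_nonneg b) (by linarith : (0:ℤ) ≤ c - 1),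
        mul_pos hc hc]
    · rcases lt_or_ge 1 b with hb1 | hb1
      · -- b ≥ 2
        have key : 0 < (a - 2 * c) * (5 * b * c - a - 2 * c) :=
          mul_pos (by linarith) (by linarith)
        nlinarith [key, mul_nonneg (mul_pos hc hc).le (by linarith : (0:ℤ) ≤ b - 2),
          mul_pos hc hc]
      · -- b = 1
        have hb1' : b = 1 := by omega
        subst hb1'
        rcases lt_or_ge 1 c with hc1 | hc1
        · -- c ≥ 2
          have key : 0 < (a - 2 * c) * (5 * c - a - 2 * c) :=
            mul_pos (by linarith) (by linarith)
          nlinarith [key, mul_pos hc hc]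
        · -- c = 1
          have hc1' : c = 1 := by omega
          subst hc1'
          have h2 : a ≤ 2 := by linarith
          nlinarith [hA]
  · -- case C : c is dominant
    rcases lt_or_ge (a * b) (2 * c) with h2 | h2
    · exact Or.inr (Or.inr h2)
    left
    have hbb : b ^ 2 < a ^ 2 := by nlinarith [mul_pos (by linarith : (0:ℤ) < a - b) (by linarith : (0:ℤ) < a + b)]
    have hb1 : b = 1 := by
      by_contra hb1
      have hb2 : 2 ≤ b := by omega
      have e1 : a * b < 3 * c := by
        nlinarith [mul_pos hc hc, hC, hbb]
      have e2 : 2 * a ≤ a * b := by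
        nlinarith [mul_nonneg ha.le (by linarith : (0:ℤ) ≤ b - 2)]
      have e3 : 5 * c ^ 2 ≤ a ^ 2 + b ^ 2 := by
        nlinarith [mul_nonneg hc.le (by linarith : (0:ℤ) ≤ a * b - 2 * c)]
      have e4 : 2 * a < 3 * c := by linarith
      nlinarith [mul_pos (by linarith : (0:ℤ) < 3 * c - 2 * a)
        (by linarith : (0:ℤ) < 3 * c + 2 * a), hbb, mul_pos hc hc]
    subst hb1
    rw [mul_one] at h2
    have hc1 : c = 1 := by
      by_contra hc1
      have hc2 : 2 ≤ c := by omega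
      have e5 : a < 3 * c := by nlinarith [mul_pos hc hc]
      have key : (0:ℤ) ≤ (a - 2 * c) * (3 * c - a) :=
        mul_nonneg (by linarith) (by linarith)
      nlinarith [key, sq_nonneg (c - 2)]
    subst hc1
    have hle : a ≤ 2 := by nlinarith
    exact ⟨by omega, rfl, rfl⟩

/-- descent: a non-minimal solution admits a strictly decreasing mutation. -/
private lemma descent_s4 {a b c : ℤ} (ha : 0 < a) (hb : 0 < b) (hc : 0 < c)
    (h : a ^ 2 + b ^ 2 + 5 * c ^ 2 = 5 * a * b * c) :
    ((a = 1 ∧ b = 2 ∧ c = 1) ∨ (a = 2 ∧ b = 1 ∧ c = 1)) ∨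
      5 * b * c < 2 * a ∨ 5 * a * c < 2 * b ∨ a * b < 2 * c := by
  rcases (ne_ab ha hb hc h).lt_or_gt with h1 | h1
  · have h' : b ^ 2 + a ^ 2 + 5 * c ^ 2 = 5 * b * a * c := by linear_combination h
    rcases descent_aux hb ha hc h1 h' with ⟨hb2, ha1, hc1⟩ | hd | hd
    · exact Or.inl (Or.inl ⟨ha1, hb2, hc1⟩)
    · exact Or.inr (Or.inr (Or.inl hd))
    · exact Or.inr (Or.inr (Or.inr (by linarith [hd, mul_comm a b])))
  · rcases descent_aux ha hb hc h1 h with hmin | hd | hd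
    · exact Or.inl (Or.inr hmin)
    · exact Or.inr (Or.inl hd)
    · exact Or.inr (Or.inr (Or.inr hd))

private lemma inS (S : Set (ℤ × ℤ × ℤ))
    (h121 : ((1:ℤ), (2:ℤ), (1:ℤ)) ∈ S) (h211 : ((2:ℤ), (1:ℤ), (1:ℤ)) ∈ S)
    (hMa : ∀ a b c : ℤ, (a, b, c) ∈ S → (5 * b * c - a, b, c) ∈ S)
    (hMb : ∀ a b c : ℤ, (a, b, c) ∈ S → (a, 5 * a * c - b, c) ∈ S)
    (hMc : ∀ a b c : ℤ, (a, b, c) ∈ S → (a, b, a * b - c) ∈ S) :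
    ∀ n : ℕ, ∀ a b c : ℤ, a + b + c ≤ (n : ℤ) → 0 < a → 0 < b → 0 < c →
      a ^ 2 + b ^ 2 + 5 * c ^ 2 = 5 * a * b * c → (a, b, c) ∈ S := by
  intro n
  induction n with
  | zero => intro a b c hn ha hb hc h; exfalso; push_cast at hn; linarith
  | succ n ih =>
    intro a b c hn ha hb hc h
    push_cast at hn
    rcases descent_s4 ha hb hc h with (⟨rfl, rfl, rfl⟩ | ⟨rfl, rfl, rfl⟩) | hd | hd | hd
    · exact h121
    · exact h211
    · -- a-mutation decreases
      obtain ⟨hp, he⟩ := mutA' ha hb hc h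
      have hlt : 5 * b * c - a < a := by linarith
      have hstep : 5 * b * c - a + 1 ≤ a := Int.lt_iff_add_one_le.mp hlt
      have hmem := ih (5 * b * c - a) b c (by linarith) hp hb hc he
      have := hMa _ _ _ hmem
      rwa [show 5 * b * c - (5 * b * c - a) = a from by ring] at this
    · obtain ⟨hp, he⟩ := mutB' ha hb hc h
      have hlt : 5 * a * c - b < b := by linarith
      have hstep : 5 * a * c - b + 1 ≤ b := Int.lt_iff_add_one_le.mp hlt
      have hmem := ih a (5 * a * c - b) c (by linarith) ha hp hc he
      have := hMb _ _ _ hmem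
      rwa [show 5 * a * c - (5 * a * c - b) = b from by ring] at this
    · obtain ⟨hp, he⟩ := mutC' ha hb hc h
      have hlt : a * b - c < c := by linarith
      have hstep : a * b - c + 1 ≤ c := Int.lt_iff_add_one_le.mp hlt
      have hmem := ih a b (a * b - c) (by linarith) ha hb hp he
      have := hMc _ _ _ hmem
      rwa [show a * b - (a * b - c) = c from by ring] at this

/-- The set of positive integer solutions of `a² + b² + 5c² = 5abc` is exactly
the smallest set of triples of positive integers containing `(1,2,1)` and
`(2,1,1)` and closed under the three mutations. -/
theorem stmt_4 :
    {p : ℤ × ℤ × ℤ | 0 < p.1 ∧ 0 < p.2.1 ∧ 0 < p.2.2 ∧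
        p.1 ^ 2 + p.2.1 ^ 2 + 5 * p.2.2 ^ 2 = 5 * p.1 * p.2.1 * p.2.2} =
      ⋂₀ {S : Set (ℤ × ℤ × ℤ) |
        (∀ p ∈ S, 0 < p.1 ∧ 0 < p.2.1 ∧ 0 < p.2.2) ∧
        (1, 2, 1) ∈ S ∧ (2, 1, 1) ∈ S ∧
        (∀ a b c : ℤ, (a, b, c) ∈ S → (5 * b * c - a, b, c) ∈ S) ∧
        (∀ a b c : ℤ, (a, b, c) ∈ S → (a, 5 * a * c - b, c) ∈ S) ∧
        (∀ a b c : ℤ, (a, b, c) ∈ S → (a, b, a * b - c) ∈ S)} := by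
  apply Set.Subset.antisymm
  · intro p hp S hS
    obtain ⟨a, b, c⟩ := p
    obtain ⟨ha, hb, hc, h⟩ := hp
    obtain ⟨-, h121, h211, hMa, hMb, hMc⟩ := hS
    exact inS S h121 h211 hMa hMb hMc (a + b + c).toNat a b c
      (Int.self_le_toNat _) ha hb hc h
  · intro p hp
    apply hp
    refine ⟨fun q hq => ⟨hq.1, hq.2.1, hq.2.2.1⟩, by norm_num [Set.mem_setOf_eq],
      by norm_num [Set.mem_setOf_eq], ?_, ?_, ?_⟩
    · rintro a b c ⟨ha, hb, hc, h⟩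
      obtain ⟨hp', he⟩ := mutA' ha hb hc h
      exact ⟨hp', hb, hc, he⟩
    · rintro a b c ⟨ha, hb, hc, h⟩
      obtain ⟨hp', he⟩ := mutB' ha hb hc h
      exact ⟨ha, hp', hc, he⟩
    · rintro a b c ⟨ha, hb, hc, h⟩
      obtain ⟨hp', he⟩ := mutC' ha hb hc h
      exact ⟨ha, hb, hp', he⟩
end

section
/- Let (a,b,c) be a Markov triple with a ≤ b ≤ c and (a,b,c) ≠ (1,1,1). Then 3ab − c < c, while 3ac − b > b and 3bc − a > a. (Thus exactly one of the three mutations strictly decreases the triple.) -/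
/-- For a Markov triple `(a,b,c)` with `a ≤ b ≤ c` and `(a,b,c) ≠ (1,1,1)`,
the mutation in the last coordinate strictly decreases it, while the other
two mutations strictly increase the mutated coordinate. -/
theorem stmt_5 (a b c : ℤ) (ha : 0 < a) (hab : a ≤ b) (hbc : b ≤ c)
    (heq : a ^ 2 + b ^ 2 + c ^ 2 = 3 * a * b * c)
    (hne : ¬(a = 1 ∧ b = 1 ∧ c = 1)) :
    3 * a * b - c < c ∧ b < 3 * a * c - b ∧ a < 3 * b * c - a := by
  have hb : 0 < b := lt_of_lt_of_le ha hab
  have hc : 0 < c := lt_of_lt_of_le hb hbc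
  refine ⟨?_, by nlinarith, by nlinarith⟩
  by_contra h
  push_neg at h
  have hc2 : c ^ 2 ≤ a ^ 2 + b ^ 2 := by nlinarith
  have ha1 : a = 1 := by nlinarith
  subst ha1
  have hcb : c = b := by nlinarith
  have hb1 : b = 1 := by nlinarith
  exact hne ⟨rfl, hb1, hcb.trans hb1⟩
end

section
/- Let (a,b,c) be a triple of positive integers with a² + b² + 2c² = 4abc. Then a, b, c are pairwise coprime and a, b, c are all odd. -/
/-- Vieta jumping: no positive solutions of `x²+y²+2z² = k·xyz` for even `k ≥ 8`. -/
lemma noSolAux : ∀ n k x y z : ℕ, 8 ≤ k → Even k → 0 < x → 0 < y → 0 < z →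
    x + y + z ≤ n → x ^ 2 + y ^ 2 + 2 * z ^ 2 = k * x * y * z → False := by
  intro n
  induction n with
  | zero => intro k x y z _ _ hx hy hz hn _; omega
  | succ n ih =>
    have key : ∀ k x y z : ℕ, 8 ≤ k → Even k → 0 < x → 0 < y → 0 < z →
        x + y + z ≤ n + 1 → y ≤ x → x ^ 2 + y ^ 2 + 2 * z ^ 2 = k * x * y * z → False := by
      intro k x y z hk hke hx hy hz hn hxy heq
      obtain ⟨m, rfl⟩ := hke
      have hy2p : 0 < y ^ 2 := pow_pos hy 2
      have hx2p : 0 < x ^ 2 := pow_pos hx 2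
      have hz2p : 0 < z ^ 2 := pow_pos hz 2
      -- x-jump
      have hxk : x < (m + m) * y * z := by
        have h0 : x * x < x * ((m + m) * y * z) := by linarith [heq, hy2p, hz2p]
        exact Nat.lt_of_mul_lt_mul_left h0
      obtain ⟨x', hx'⟩ : ∃ x', (m + m) * y * z = x + x' :=
        ⟨(m + m) * y * z - x, (Nat.add_sub_cancel' hxk.le).symm⟩
      have h1 : x * ((m + m) * y * z) = x * (x + x') := by rw [hx']
      have hxx' : x * x' = y ^ 2 + 2 * z ^ 2 := by linarith [heq, h1]
      have hx'pos : 0 < x' := by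
        rcases Nat.eq_zero_or_pos x' with h | h
        · subst h; linarith [hxx', hy2p, hz2p]
        · exact h
      have h2 : x' * ((m + m) * y * z) = x' * (x + x') := by rw [hx']
      have neweq : x' ^ 2 + y ^ 2 + 2 * z ^ 2 = (m + m) * x' * y * z := by
        linarith [h2, hxx']
      rcases lt_or_ge x' x with hlt | hge
      · exact ih (m + m) x' y z hk ⟨m, rfl⟩ hx'pos hy hz (by omega) neweq
      have hx2 : x ^ 2 ≤ y ^ 2 + 2 * z ^ 2 := by linarith [hxx', Nat.mul_le_mul (le_refl x) hge]
      -- z-jump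
      have hzk : z < m * x * y := by
        have h0 : (2 * z) * z < (2 * z) * (m * x * y) := by linarith [heq, hx2p, hy2p]
        exact Nat.lt_of_mul_lt_mul_left h0
      obtain ⟨z', hz'⟩ : ∃ z', m * x * y = z + z' :=
        ⟨m * x * y - z, (Nat.add_sub_cancel' hzk.le).symm⟩
      have h3 : (2 * z) * (m * x * y) = (2 * z) * (z + z') := by rw [hz']
      have hzz' : 2 * (z * z') = x ^ 2 + y ^ 2 := by linarith [heq, h3]
      have hz'pos : 0 < z' := by
        rcases Nat.eq_zero_or_pos z' with h | h
        · subst h; linarith [hzz', hx2p, hy2p]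
        · exact h
      have h4 : (2 * z') * (m * x * y) = (2 * z') * (z + z') := by rw [hz']
      have neweq2 : x ^ 2 + y ^ 2 + 2 * z' ^ 2 = (m + m) * x * y * z' := by
        linarith [h4, hzz']
      rcases lt_or_ge z' z with hlt | hge'
      · exact ih (m + m) x y z' hk ⟨m, rfl⟩ hx hy hz'pos (by omega) neweq2
      have hz2 : 2 * z ^ 2 ≤ x ^ 2 + y ^ 2 := by linarith [hzz', Nat.mul_le_mul (le_refl z) hge']
      -- final contradiction
      have hxy2 : y ^ 2 ≤ x ^ 2 := Nat.pow_le_pow_left hxy 2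
      rcases le_total y z with hyz | hzy
      · have hy2z : y ^ 2 ≤ z ^ 2 := Nat.pow_le_pow_left hyz 2
        have hzx : z ≤ x := by
          by_contra hcon
          push_neg at hcon
          have := Nat.pow_lt_pow_left hcon (two_ne_zero)
          linarith [hz2, hxy2]
        have h6 : (m + m) * x * y * z ≤ 6 * z ^ 2 := by linarith [heq, hx2, hy2z]
        have h8 : 8 * z ^ 2 ≤ (m + m) * x * y * z := by
          have := Nat.mul_le_mul hk (Nat.mul_le_mul hzx (Nat.mul_le_mul hy (le_refl z)))
          linarith [this]
        linarith [h6, h8, hz2p]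
      · have hz2y : z ^ 2 ≤ y ^ 2 := Nat.pow_le_pow_left hzy 2
        have h6 : (m + m) * x * y * z ≤ 6 * y ^ 2 := by linarith [heq, hx2, hz2y]
        have h8 : 8 * y ^ 2 ≤ (m + m) * x * y * z := by
          have := Nat.mul_le_mul hk (Nat.mul_le_mul hxy (Nat.mul_le_mul (le_refl y) hz))
          linarith [this]
        linarith [h6, h8, hy2p]
    intro k x y z hk hke hx hy hz hn heq
    rcases le_total y x with h | h
    · exact key k x y z hk hke hx hy hz hn h heq
    · have heq' : y ^ 2 + x ^ 2 + 2 * z ^ 2 = k * y * x * z := by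
        have h2 : k * y * x * z = k * x * y * z := by ring
        rw [h2]; linarith [heq]
      exact key k y x z hk hke hy hx hz (by omega) h heq'

lemma noSol (k x y z : ℕ) (hk : 8 ≤ k) (hke : Even k) (hx : 0 < x) (hy : 0 < y)
    (hz : 0 < z) (heq : x ^ 2 + y ^ 2 + 2 * z ^ 2 = k * x * y * z) : False :=
  noSolAux (x + y + z) k x y z hk hke hx hy hz le_rfl heq

/-- For a positive integer solution of `a² + b² + 2c² = 4abc`, the integers
`a`, `b`, `c` are pairwise coprime and all odd. -/
theorem stmt_8 (a b c : ℕ) (ha : 0 < a) (hb : 0 < b) (hc : 0 < c)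
    (heq : a ^ 2 + b ^ 2 + 2 * c ^ 2 = 4 * a * b * c) :
    Nat.Coprime a b ∧ Nat.Coprime a c ∧ Nat.Coprime b c ∧
      Odd a ∧ Odd b ∧ Odd c := by
  -- step 1: not both a, b even
  have hnotboth : ¬ (Even a ∧ Even b) := by
    rintro ⟨⟨i, hi⟩, ⟨j, hj⟩⟩
    subst hi; subst hj
    have hi0 : 0 < i := by omega
    have hj0 : 0 < j := by omega
    have hcev : 2 ∣ c ^ 2 := by
      have hkey : 2 * c ^ 2 + 4 * (i ^ 2 + j ^ 2) = 4 * (4 * (i * j * c)) := by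
        linarith [heq]
      obtain ⟨U, hU⟩ : ∃ U, i ^ 2 + j ^ 2 = U := ⟨_, rfl⟩
      obtain ⟨W, hW⟩ : ∃ W, i * j * c = W := ⟨_, rfl⟩
      rw [hU, hW] at hkey
      omega
    have hc2 : 2 ∣ c := Nat.Prime.dvd_of_dvd_pow Nat.prime_two hcev
    obtain ⟨c₀, hc₀⟩ := hc2
    subst hc₀
    have hc0 : 0 < c₀ := by omega
    exact noSol 8 i j c₀ le_rfl ⟨4, rfl⟩ hi0 hj0 hc0 (by linarith [heq])
  -- step 2: a and b have the same parity, hence both odd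
  have hEab : Even (a ^ 2 + b ^ 2) := by
    have h4 : Even (a ^ 2 + b ^ 2 + 2 * c ^ 2) := by
      rw [heq]; exact ⟨2 * a * b * c, by ring⟩
    have h2c : Even (2 * c ^ 2) := ⟨c ^ 2, by ring⟩
    exact (Nat.even_add.mp h4).mpr h2c
  have hiff : Even a ↔ Even b := by
    have h := Nat.even_add.mp hEab
    simpa [Nat.even_pow] using h
  have hodda : Odd a := by
    rcases Nat.even_or_odd a with h | h
    · exact absurd ⟨h, hiff.mp h⟩ hnotboth
    · exact h
  have hoddb : Odd b := by
    rcases Nat.even_or_odd b with h | h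
    · exact absurd ⟨hiff.mpr h, h⟩ hnotboth
    · exact h
  -- step 3: c is odd
  have hoddc : Odd c := by
    rcases Nat.even_or_odd c with h | h
    · exfalso
      obtain ⟨i, hi⟩ := hodda
      obtain ⟨j, hj⟩ := hoddb
      obtain ⟨c₀, hc₀⟩ := h
      subst hi; subst hj; subst hc₀
      have hkey : 4 * (i ^ 2 + i + j ^ 2 + j + 2 * c₀ ^ 2) + 2
          = 4 * (2 * ((2 * i + 1) * (2 * j + 1) * c₀)) := by linarith [heq]
      obtain ⟨U, hU⟩ : ∃ U, i ^ 2 + i + j ^ 2 + j + 2 * c₀ ^ 2 = U := ⟨_, rfl⟩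
      obtain ⟨W, hW⟩ : ∃ W, (2 * i + 1) * (2 * j + 1) * c₀ = W := ⟨_, rfl⟩
      rw [hU, hW] at hkey
      omega
    · exact h
  -- step 4: no prime divides two of a, b, c
  have cop_ab : ∀ p : ℕ, p.Prime → p ∣ a → p ∣ b → False := by
    intro p hp hpa hpb
    have hpodd : p ≠ 2 := by
      rintro rfl
      have := Nat.odd_iff.mp hodda
      omega
    have hpa2 : p ∣ a ^ 2 := dvd_pow hpa two_ne_zero
    have hpb2 : p ∣ b ^ 2 := dvd_pow hpb two_ne_zero
    have hp4 : p ∣ 4 * a * b * c :=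
      Dvd.dvd.mul_right (Dvd.dvd.mul_right (Dvd.dvd.mul_left hpa 4) b) c
    have hre : 2 * c ^ 2 + (a ^ 2 + b ^ 2) = 4 * a * b * c := by linarith
    have hp2c : p ∣ 2 * c ^ 2 := by
      rw [Nat.eq_sub_of_add_eq hre]
      exact Nat.dvd_sub hp4 (dvd_add hpa2 hpb2)
    have hpc2 : p ∣ c ^ 2 := by
      rcases (Nat.Prime.dvd_mul hp).mp hp2c with h | h
      · exact absurd ((Nat.prime_dvd_prime_iff_eq hp Nat.prime_two).mp h) hpodd
      · exact h
    have hpc : p ∣ c := Nat.Prime.dvd_of_dvd_pow hp hpc2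
    obtain ⟨a₁, ha₁⟩ := hpa
    obtain ⟨b₁, hb₁⟩ := hpb
    obtain ⟨c₁, hc₁⟩ := hpc
    subst ha₁; subst hb₁; subst hc₁
    have hp0 : 0 < p := hp.pos
    have ha1 : 0 < a₁ := by
      rcases Nat.eq_zero_or_pos a₁ with h | h
      · subst h; simp at ha
      · exact h
    have hb1 : 0 < b₁ := by
      rcases Nat.eq_zero_or_pos b₁ with h | h
      · subst h; simp at hb
      · exact h
    have hc1 : 0 < c₁ := by
      rcases Nat.eq_zero_or_pos c₁ with h | h
      · subst h; simp at hc
      · exact h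
    have hcancel : p ^ 2 * (a₁ ^ 2 + b₁ ^ 2 + 2 * c₁ ^ 2)
        = p ^ 2 * (4 * p * a₁ * b₁ * c₁) := by linarith [heq]
    have heq2 := Nat.eq_of_mul_eq_mul_left (by positivity : 0 < p ^ 2) hcancel
    exact noSol (4 * p) a₁ b₁ c₁ (by have := hp.two_le; omega) ⟨2 * p, by ring⟩
      ha1 hb1 hc1 heq2
  have cop_ac : ∀ p : ℕ, p.Prime → p ∣ a → p ∣ c → False := by
    intro p hp hpa hpc
    have hpa2 : p ∣ a ^ 2 := dvd_pow hpa two_ne_zero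
    have hpc2 : p ∣ 2 * c ^ 2 := Dvd.dvd.mul_left (dvd_pow hpc two_ne_zero) 2
    have hp4 : p ∣ 4 * a * b * c :=
      Dvd.dvd.mul_right (Dvd.dvd.mul_right (Dvd.dvd.mul_left hpa 4) b) c
    have hre : b ^ 2 + (a ^ 2 + 2 * c ^ 2) = 4 * a * b * c := by linarith
    have hpb2 : p ∣ b ^ 2 := by
      rw [Nat.eq_sub_of_add_eq hre]
      exact Nat.dvd_sub hp4 (dvd_add hpa2 hpc2)
    exact cop_ab p hp hpa (Nat.Prime.dvd_of_dvd_pow hp hpb2)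
  have cop_bc : ∀ p : ℕ, p.Prime → p ∣ b → p ∣ c → False := by
    intro p hp hpb hpc
    have hpb2 : p ∣ b ^ 2 := dvd_pow hpb two_ne_zero
    have hpc2 : p ∣ 2 * c ^ 2 := Dvd.dvd.mul_left (dvd_pow hpc two_ne_zero) 2
    have hp4 : p ∣ 4 * a * b * c :=
      Dvd.dvd.mul_right (Dvd.dvd.mul_left hpb (4 * a)) c
    have hre : a ^ 2 + (b ^ 2 + 2 * c ^ 2) = 4 * a * b * c := by linarith
    have hpa2 : p ∣ a ^ 2 := by
      rw [Nat.eq_sub_of_add_eq hre]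
      exact Nat.dvd_sub hp4 (dvd_add hpb2 hpc2)
    exact cop_ab p hp (Nat.Prime.dvd_of_dvd_pow hp hpa2) hpb
  refine ⟨?_, ?_, ?_, hodda, hoddb, hoddc⟩
  · by_contra h
    obtain ⟨p, hp, hpd⟩ := Nat.exists_prime_and_dvd h
    exact cop_ab p hp (hpd.trans (Nat.gcd_dvd_left a b)) (hpd.trans (Nat.gcd_dvd_right a b))
  · by_contra h
    obtain ⟨p, hp, hpd⟩ := Nat.exists_prime_and_dvd h
    exact cop_ac p hp (hpd.trans (Nat.gcd_dvd_left a c)) (hpd.trans (Nat.gcd_dvd_right a c))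
  · by_contra h
    obtain ⟨p, hp, hpd⟩ := Nat.exists_prime_and_dvd h
    exact cop_bc p hp (hpd.trans (Nat.gcd_dvd_left b c)) (hpd.trans (Nat.gcd_dvd_right b c))
end

section
/- Let (a,b,c) be a triple of positive integers with a² + 2b² + 3c² = 6abc. Then a, b, c are pairwise coprime, a is coprime to 6, b is coprime to 3, and c is odd. -/
set_option maxHeartbeats 1000000

private lemma min111 (a b c : ℤ) (ha : 1 ≤ a) (hb : 1 ≤ b) (hc : 1 ≤ c)
    (heq : a^2+2*b^2+3*c^2 = 6*a*b*c)
    (h1 : a^2 ≤ 2*b^2+3*c^2) (h2 : 2*b^2 ≤ a^2+3*c^2) (h3 : 3*c^2 ≤ a^2+2*b^2) :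
    a = 1 ∧ b = 1 ∧ c = 1 := by
  have hc1 : c = 1 := by
    have : c ≤ 1 := by
      nlinarith [mul_nonneg (sub_nonneg.2 ha) (sub_nonneg.2 hb),
        mul_nonneg (sub_nonneg.2 hb) (sub_nonneg.2 hc),
        mul_nonneg (sub_nonneg.2 ha) (sub_nonneg.2 hc),
        sq_nonneg (a-b), sq_nonneg (a-c), sq_nonneg (b-c)]
    omega
  subst hc1
  have hb1 : b = 1 := by
    have : b ≤ 1 := by
      nlinarith [mul_nonneg (sub_nonneg.2 ha) (sub_nonneg.2 hb), sq_nonneg (a-b),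
        sq_nonneg (a-2*b), sq_nonneg (a*b-1)]
    omega
  subst hb1
  have ha1 : a = 1 := by
    have : a ≤ 1 := by
      nlinarith [sq_nonneg (a-1), sq_nonneg (a-2)]
    omega
  exact ⟨ha1, rfl, rfl⟩

private lemma copr_trans {x x' y s : ℕ} (hsum : x + x' = s) (hdvd : Nat.gcd x y ∣ s)
    (hc : Nat.Coprime x' y) : Nat.Coprime x y := by
  have hx' : Nat.gcd x y ∣ x' := by
    have h1 : Nat.gcd x y ∣ s - x := Nat.dvd_sub hdvd (Nat.gcd_dvd_left x y)
    have h2 : s - x = x' := by omega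
    rwa [h2] at h1
  have h2 : Nat.gcd x y ∣ Nat.gcd x' y := Nat.dvd_gcd hx' (Nat.gcd_dvd_right x y)
  have h3 : Nat.gcd x' y = 1 := hc
  rw [h3] at h2
  exact Nat.dvd_one.mp h2

private lemma key : ∀ n : ℕ, ∀ a b c : ℕ, 0 < a → 0 < b → 0 < c →
    a ^ 2 + 2 * b ^ 2 + 3 * c ^ 2 = 6 * a * b * c → a + b + c ≤ n →
    Nat.Coprime a b ∧ Nat.Coprime a c ∧ Nat.Coprime b c ∧
      Nat.Coprime a 6 ∧ Nat.Coprime b 3 ∧ Odd c := by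
  intro n
  induction n with
  | zero => intro a b c ha hb hc heq hle; omega
  | succ n ih =>
    intro a b c ha hb hc heq hle
    have heqZ : (a:ℤ)^2+2*(b:ℤ)^2+3*(c:ℤ)^2 = 6*a*b*c := by exact_mod_cast heq
    by_cases H1 : 2*b^2+3*c^2 < a^2
    · -- a-jump
      have h6 : a ≤ 6*b*c := by
        have h : a*a ≤ a*(6*b*c) := by nlinarith [heq]
        exact Nat.le_of_mul_le_mul_left h ha
      obtain ⟨a', hsum⟩ : ∃ a', a + a' = 6*b*c := ⟨6*b*c - a, Nat.add_sub_cancel' h6⟩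
      have hsumZ : (a:ℤ) + a' = 6*b*c := by exact_mod_cast hsum
      have hmul : a * a' = 2*b^2+3*c^2 := by
        zify; linear_combination (a:ℤ) * hsumZ - heqZ
      have ha' : 0 < a' := by
        rcases Nat.eq_zero_or_pos a' with h0 | h
        · rw [h0, mul_zero] at hmul; nlinarith
        · exact h
      have hlt : a' < a := by
        by_contra h
        push_neg at h
        have := Nat.mul_le_mul_left a h
        nlinarith
      have heq' : a' ^ 2 + 2 * b ^ 2 + 3 * c ^ 2 = 6 * a' * b * c := by
        have hmulZ : (a:ℤ) * a' = 2*(b:ℤ)^2+3*(c:ℤ)^2 := by exact_mod_cast hmul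
        zify; linear_combination (-1:ℤ) * hmulZ + (a':ℤ) * hsumZ
      obtain ⟨c1, c2, c3, c4, c5, c6⟩ := ih a' b c ha' hb hc heq' (by omega)
      refine ⟨?_, ?_, c3, ?_, c5, c6⟩
      · exact copr_trans hsum (dvd_trans (Nat.gcd_dvd_right a b)
          (Dvd.dvd.mul_right (dvd_mul_left b 6) c)) c1
      · exact copr_trans hsum (dvd_trans (Nat.gcd_dvd_right a c)
          (dvd_mul_left c (6*b))) c2
      · exact copr_trans hsum (dvd_trans (Nat.gcd_dvd_right a 6)
          (Dvd.dvd.mul_right (dvd_mul_right 6 b) c)) c4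
    · by_cases H2 : a^2+3*c^2 < 2*b^2
      · -- b-jump
        have h6 : b ≤ 3*a*c := by
          have h : (2*b)*b ≤ (2*b)*(3*a*c) := by nlinarith [heq]
          exact Nat.le_of_mul_le_mul_left h (by omega)
        obtain ⟨b', hsum⟩ : ∃ b', b + b' = 3*a*c := ⟨3*a*c - b, Nat.add_sub_cancel' h6⟩
        have hsumZ : (b:ℤ) + b' = 3*a*c := by exact_mod_cast hsum
        have hmul : 2*(b * b') = a^2+3*c^2 := by
          zify; linear_combination 2*(b:ℤ) * hsumZ - heqZ
        have hb' : 0 < b' := by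
          rcases Nat.eq_zero_or_pos b' with h0 | h
          · rw [h0, mul_zero] at hmul; nlinarith
          · exact h
        have hlt : b' < b := by
          by_contra h
          push_neg at h
          have := Nat.mul_le_mul_left b h
          nlinarith
        have heq' : a ^ 2 + 2 * b' ^ 2 + 3 * c ^ 2 = 6 * a * b' * c := by
          have hmulZ : 2*((b:ℤ) * b') = (a:ℤ)^2+3*(c:ℤ)^2 := by exact_mod_cast hmul
          zify; linear_combination (-1:ℤ) * hmulZ + 2*(b':ℤ) * hsumZ
        obtain ⟨c1, c2, c3, c4, c5, c6⟩ := ih a b' c ha hb' hc heq' (by omega)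
        refine ⟨?_, c2, ?_, c4, ?_, c6⟩
        · exact (copr_trans hsum (dvd_trans (Nat.gcd_dvd_right b a)
            (Dvd.dvd.mul_right (dvd_mul_left a 3) c)) c1.symm).symm
        · exact copr_trans hsum (dvd_trans (Nat.gcd_dvd_right b c)
            (dvd_mul_left c (3*a))) c3
        · exact copr_trans hsum (dvd_trans (Nat.gcd_dvd_right b 3)
            (Dvd.dvd.mul_right (dvd_mul_right 3 a) c)) c5
      · by_cases H3 : a^2+2*b^2 < 3*c^2
        · -- c-jump
          have h6 : c ≤ 2*a*b := by
            have h : (3*c)*c ≤ (3*c)*(2*a*b) := by nlinarith [heq]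
            exact Nat.le_of_mul_le_mul_left h (by omega)
          obtain ⟨c', hsum⟩ : ∃ c', c + c' = 2*a*b := ⟨2*a*b - c, Nat.add_sub_cancel' h6⟩
          have hsumZ : (c:ℤ) + c' = 2*a*b := by exact_mod_cast hsum
          have hmul : 3*(c * c') = a^2+2*b^2 := by
            zify; linear_combination 3*(c:ℤ) * hsumZ - heqZ
          have hc' : 0 < c' := by
            rcases Nat.eq_zero_or_pos c' with h0 | h
            · rw [h0, mul_zero] at hmul; nlinarith
            · exact h
          have hlt : c' < c := by
            by_contra h
            push_neg at h
            have := Nat.mul_le_mul_left c h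
            nlinarith
          have heq' : a ^ 2 + 2 * b ^ 2 + 3 * c' ^ 2 = 6 * a * b * c' := by
            have hmulZ : 3*((c:ℤ) * c') = (a:ℤ)^2+2*(b:ℤ)^2 := by exact_mod_cast hmul
            zify; linear_combination (-1:ℤ) * hmulZ + 3*(c':ℤ) * hsumZ
          obtain ⟨c1, c2, c3, c4, c5, c6⟩ := ih a b c' ha hb hc' heq' (by omega)
          refine ⟨c1, ?_, ?_, c4, c5, ?_⟩
          · exact (copr_trans hsum (dvd_trans (Nat.gcd_dvd_right c a)
              (dvd_mul_of_dvd_left (dvd_mul_left a 2) b)) c2.symm).symm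
          · exact (copr_trans hsum (dvd_trans (Nat.gcd_dvd_right c b)
              (dvd_mul_left b (2*a))) c3.symm).symm
          · obtain ⟨k, hk⟩ := c6
            obtain ⟨m, hm⟩ : ∃ m, a*b = m := ⟨_, rfl⟩
            rw [show 2*a*b = 2*(a*b) by ring, hm] at hsum
            exact ⟨m - k - 1, by omega⟩
        · -- minimal case
          push_neg at H1 H2 H3
          obtain ⟨e1, e2, e3⟩ := min111 a b c (by exact_mod_cast ha) (by exact_mod_cast hb)
            (by exact_mod_cast hc) heqZ (by exact_mod_cast H1) (by exact_mod_cast H2)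
            (by exact_mod_cast H3)
          have ea : a = 1 := by exact_mod_cast e1
          have eb : b = 1 := by exact_mod_cast e2
          have ec : c = 1 := by exact_mod_cast e3
          subst ea; subst eb; subst ec
          exact ⟨Nat.coprime_one_left _, Nat.coprime_one_left _, Nat.coprime_one_left _,
            Nat.coprime_one_left _, Nat.coprime_one_left _, odd_one⟩

/-- For a positive integer solution of `a² + 2b² + 3c² = 6abc`, the integers
`a`, `b`, `c` are pairwise coprime, `a` is coprime to `6`, `b` is coprime to
`3`, and `c` is odd. -/
theorem stmt_9 (a b c : ℕ) (ha : 0 < a) (hb : 0 < b) (hc : 0 < c)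
    (heq : a ^ 2 + 2 * b ^ 2 + 3 * c ^ 2 = 6 * a * b * c) :
    Nat.Coprime a b ∧ Nat.Coprime a c ∧ Nat.Coprime b c ∧
      Nat.Coprime a 6 ∧ Nat.Coprime b 3 ∧ Odd c := by
  exact key (a+b+c) a b c ha hb hc heq le_rfl
end

section
/- Let (a,b,c) be a triple of positive integers with a² + b² + 5c² = 5abc. Then a, b, c are pairwise coprime and neither a nor b is divisible by 5. -/
set_option maxHeartbeats 1000000 in
/-- Descent lemma: no integer solution with a common divisor `d ≥ 2`. -/
lemma key_descent : ∀ n : ℕ, ∀ a b c d : ℤ, 2 ≤ d → d ∣ a → d ∣ b → d ∣ c →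
    0 < a → 0 < b → 0 < c → a ^ 2 + b ^ 2 + 5 * c ^ 2 = 5 * a * b * c →
    a + b + c ≤ (n : ℤ) → False := by
  intro n
  induction n using Nat.strong_induction_on with
  | _ n ih =>
    intro a b c d hd hda hdb hdc ha hb hc heq hn
    have ha2 : 2 ≤ a := hd.trans (Int.le_of_dvd ha hda)
    have hb2 : 2 ≤ b := hd.trans (Int.le_of_dvd hb hdb)
    have hc2 : 2 ≤ c := hd.trans (Int.le_of_dvd hc hdc)
    have hn1 : 1 ≤ n := by
      have : (1:ℤ) ≤ (n:ℤ) := by linarith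
      exact_mod_cast this
    have hcast : ((n - 1 : ℕ) : ℤ) = (n : ℤ) - 1 := by
      push_cast [Nat.cast_sub hn1]; ring
    rcases lt_or_ge (5*b*c - a) a with h | haj
    · -- jump a
      have ha' : 0 < 5*b*c - a := by nlinarith
      have hda' : d ∣ 5*b*c - a := dvd_sub (hdc.mul_left (5*b)) hda
      have heq' : (5*b*c - a)^2 + b^2 + 5*c^2 = 5*(5*b*c - a)*b*c := by
        linear_combination heq
      exact ih (n-1) (by omega) (5*b*c - a) b c d hd hda' hdb hdc ha' hb hc heq'
        (by rw [hcast]; linarith)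
    rcases lt_or_ge (5*a*c - b) b with h | hbj
    · -- jump b
      have hb' : 0 < 5*a*c - b := by nlinarith
      have hdb' : d ∣ 5*a*c - b := dvd_sub (hdc.mul_left (5*a)) hdb
      have heq' : a^2 + (5*a*c - b)^2 + 5*c^2 = 5*a*(5*a*c - b)*c := by
        linear_combination heq
      exact ih (n-1) (by omega) a (5*a*c - b) c d hd hda hdb' hdc ha hb' hc heq'
        (by rw [hcast]; linarith)
    rcases lt_or_ge (a*b - c) c with h | hcj
    · -- jump c
      have hc' : 0 < a*b - c := by nlinarith
      have hdc' : d ∣ a*b - c := dvd_sub (hda.mul_right b) hdc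
      have heq' : a^2 + b^2 + 5*(a*b - c)^2 = 5*a*b*(a*b - c) := by
        linear_combination heq
      exact ih (n-1) (by omega) a b (a*b - c) d hd hda hdb hdc' ha hb hc' heq'
        (by rw [hcast]; linarith)
    -- minimal case
    have ia : a^2 ≤ b^2 + 5*c^2 := by
      nlinarith [mul_le_mul_of_nonneg_left haj ha.le]
    have ib : b^2 ≤ a^2 + 5*c^2 := by
      nlinarith [mul_le_mul_of_nonneg_left hbj hb.le]
    have ic : 5*c^2 ≤ a^2 + b^2 := by
      nlinarith [mul_le_mul_of_nonneg_left hcj hc.le]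
    have hc4 : 4 ≤ c^2 := by nlinarith [mul_le_mul hc2 hc2 (by norm_num) (by linarith)]
    rcases le_total a b with hab | hab
    · have hab2 : a^2 ≤ b^2 := by nlinarith [mul_le_mul hab hab ha.le (by linarith)]
      have h1 : 5*a*b*c ≤ 4*b^2 := by linarith
      have h3 : 5*a*c ≤ 4*b := by
        have h1' : (5*a*c)*b ≤ (4*b)*b := by nlinarith [h1]
        exact le_of_mul_le_mul_right h1' hb
      have hsq : (5*a*c)*(5*a*c) ≤ (4*b)*(4*b) :=
        mul_self_le_mul_self (by positivity) h3
      have h5 : 25*(a^2*c^2) ≤ 16*a^2 + 80*c^2 := by linarith [hsq, ib]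
      have ha4 : 4 ≤ a^2 := by nlinarith [mul_le_mul ha2 ha2 (by norm_num) (by linarith)]
      have e1 : 16*a^2 ≤ 4*(a^2*c^2) := by
        nlinarith [mul_nonneg (sq_nonneg a) (by linarith : (0:ℤ) ≤ c^2 - 4)]
      have e2 : 80*c^2 ≤ 20*(a^2*c^2) := by
        nlinarith [mul_nonneg (by linarith : (0:ℤ) ≤ a^2 - 4) (sq_nonneg c)]
      have e3 : 0 < a^2*c^2 := by positivity
      linarith
    · have hab2 : b^2 ≤ a^2 := by nlinarith [mul_le_mul hab hab hb.le (by linarith)]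
      have h1 : 5*a*b*c ≤ 4*a^2 := by linarith
      have h3 : 5*b*c ≤ 4*a := by
        have h1' : (5*b*c)*a ≤ (4*a)*a := by nlinarith [h1]
        exact le_of_mul_le_mul_right h1' ha
      have hsq : (5*b*c)*(5*b*c) ≤ (4*a)*(4*a) :=
        mul_self_le_mul_self (by positivity) h3
      have h5 : 25*(b^2*c^2) ≤ 16*b^2 + 80*c^2 := by linarith [hsq, ia]
      have hb4 : 4 ≤ b^2 := by nlinarith [mul_le_mul hb2 hb2 (by norm_num) (by linarith)]
      have e1 : 16*b^2 ≤ 4*(b^2*c^2) := by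
        nlinarith [mul_nonneg (sq_nonneg b) (by linarith : (0:ℤ) ≤ c^2 - 4)]
      have e2 : 80*c^2 ≤ 20*(b^2*c^2) := by
        nlinarith [mul_nonneg (by linarith : (0:ℤ) ≤ b^2 - 4) (sq_nonneg c)]
      have e3 : 0 < b^2*c^2 := by positivity
      linarith

/-- For a positive integer solution of `a² + b² + 5c² = 5abc`, the integers
`a`, `b`, `c` are pairwise coprime and neither `a` nor `b` is divisible
by `5`. -/
theorem stmt_10 (a b c : ℕ) (ha : 0 < a) (hb : 0 < b) (hc : 0 < c)
    (heq : a ^ 2 + b ^ 2 + 5 * c ^ 2 = 5 * a * b * c) :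
    Nat.Coprime a b ∧ Nat.Coprime a c ∧ Nat.Coprime b c ∧
      ¬(5 ∣ a) ∧ ¬(5 ∣ b) := by
  have hab : Nat.Coprime a b := by
    by_contra hg
    have hgpos : 0 < Nat.gcd a b := Nat.gcd_pos_of_pos_left b ha
    have hg2 : Nat.gcd a b ≠ 1 := hg
    set p := (Nat.gcd a b).minFac with hpdef
    have hp : p.Prime := Nat.minFac_prime hg2
    have hpa : p ∣ a := (Nat.minFac_dvd _).trans (Nat.gcd_dvd_left a b)
    have hpb : p ∣ b := (Nat.minFac_dvd _).trans (Nat.gcd_dvd_right a b)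
    have hpa2 : p ∣ a^2 := dvd_pow hpa two_ne_zero
    have hpb2 : p ∣ b^2 := dvd_pow hpb two_ne_zero
    have htot : p ∣ a^2 + b^2 + 5*c^2 := by
      rw [heq]; exact ((hpa.mul_left 5).mul_right b).mul_right c
    have h5c : p ∣ 5*c^2 := by
      have h := Nat.dvd_sub (Nat.dvd_sub htot hpa2) hpb2
      have e : a^2 + b^2 + 5*c^2 - a^2 - b^2 = 5*c^2 := by omega
      rwa [e] at h
    have hpc : p ∣ c := by
      rcases (Nat.Prime.dvd_mul hp).1 h5c with h5 | hcc
      · have hp5 : p = 5 := (Nat.prime_dvd_prime_iff_eq hp (by norm_num)).1 h5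
        have hpp2 : p*p ∣ a^2 := by
          rw [pow_two]; exact mul_dvd_mul hpa hpa
        have hpp2' : p*p ∣ b^2 := by
          rw [pow_two]; exact mul_dvd_mul hpb hpb
        have hpptot : p*p ∣ a^2 + b^2 + 5*c^2 := by
          rw [heq]
          exact (mul_dvd_mul hpa hpb).trans ⟨5*c, by ring⟩
        have h25 : p*p ∣ 5*c^2 := by
          have h := Nat.dvd_sub (Nat.dvd_sub hpptot hpp2) hpp2'
          have e : a^2 + b^2 + 5*c^2 - a^2 - b^2 = 5*c^2 := by omega
          rwa [e] at h
        rw [hp5] at h25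
        have h5c2 : (5:ℕ) ∣ c^2 :=
          (mul_dvd_mul_iff_left (by norm_num : (5:ℕ) ≠ 0)).1 h25
        have : (5:ℕ) ∣ c := Nat.Prime.dvd_of_dvd_pow (by norm_num) h5c2
        rwa [hp5]
      · exact hp.dvd_of_dvd_pow hcc
    exact key_descent (a+b+c) a b c p (by exact_mod_cast hp.two_le)
      (Int.natCast_dvd_natCast.2 hpa) (Int.natCast_dvd_natCast.2 hpb)
      (Int.natCast_dvd_natCast.2 hpc)
      (by exact_mod_cast ha) (by exact_mod_cast hb) (by exact_mod_cast hc)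
      (by exact_mod_cast heq) (by push_cast; linarith)
  have hdvd_of : ∀ p : ℕ, p.Prime → p ∣ a → p ∣ b → False := by
    intro p hp hpa hpb
    have : p ∣ 1 := hab ▸ Nat.dvd_gcd hpa hpb
    exact hp.one_lt.ne' (Nat.dvd_one.1 this)
  have hac : Nat.Coprime a c := by
    by_contra hg
    have hp : (Nat.gcd a c).minFac.Prime := Nat.minFac_prime hg
    set p := (Nat.gcd a c).minFac
    have hpa : p ∣ a := (Nat.minFac_dvd _).trans (Nat.gcd_dvd_left a c)
    have hpc : p ∣ c := (Nat.minFac_dvd _).trans (Nat.gcd_dvd_right a c)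
    have htot : p ∣ a^2 + b^2 + 5*c^2 := by
      rw [heq]; exact ((hpa.mul_left 5).mul_right b).mul_right c
    have hb2 : p ∣ b^2 := by
      have h := Nat.dvd_sub (Nat.dvd_sub htot (dvd_pow hpa two_ne_zero))
        ((dvd_pow hpc two_ne_zero).mul_left 5)
      have e : a^2 + b^2 + 5*c^2 - a^2 - 5*c^2 = b^2 := by omega
      rwa [e] at h
    exact hdvd_of p hp hpa (hp.dvd_of_dvd_pow hb2)
  have hbc : Nat.Coprime b c := by
    by_contra hg
    have hp : (Nat.gcd b c).minFac.Prime := Nat.minFac_prime hg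
    set p := (Nat.gcd b c).minFac
    have hpb : p ∣ b := (Nat.minFac_dvd _).trans (Nat.gcd_dvd_left b c)
    have hpc : p ∣ c := (Nat.minFac_dvd _).trans (Nat.gcd_dvd_right b c)
    have htot : p ∣ a^2 + b^2 + 5*c^2 := by
      rw [heq]; exact (((hpb.mul_left (5*a))).mul_right c)
    have ha2 : p ∣ a^2 := by
      have h := Nat.dvd_sub (Nat.dvd_sub htot (dvd_pow hpb two_ne_zero))
        ((dvd_pow hpc two_ne_zero).mul_left 5)
      have e : a^2 + b^2 + 5*c^2 - b^2 - 5*c^2 = a^2 := by omega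
      rwa [e] at h
    exact hdvd_of p hp (hp.dvd_of_dvd_pow ha2) hpb
  have h5tot : (5:ℕ) ∣ a^2 + b^2 + 5*c^2 := by
    rw [heq]; exact ((dvd_refl 5).mul_right a).mul_right b |>.mul_right c
  have h5a : ¬ (5 ∣ a) := by
    intro h5a
    have hb2 : (5:ℕ) ∣ b^2 := by
      have h := Nat.dvd_sub (Nat.dvd_sub h5tot (dvd_pow h5a two_ne_zero))
        (Dvd.dvd.mul_right (dvd_refl 5) (c^2))
      have e : a^2 + b^2 + 5*c^2 - a^2 - 5*c^2 = b^2 := by omega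
      rwa [e] at h
    exact hdvd_of 5 (by norm_num) h5a ((Nat.prime_five).dvd_of_dvd_pow hb2)
  have h5b : ¬ (5 ∣ b) := by
    intro h5b
    have ha2 : (5:ℕ) ∣ a^2 := by
      have h := Nat.dvd_sub (Nat.dvd_sub h5tot (dvd_pow h5b two_ne_zero))
        (Dvd.dvd.mul_right (dvd_refl 5) (c^2))
      have e : a^2 + b^2 + 5*c^2 - b^2 - 5*c^2 = a^2 := by omega
      rwa [e] at h
    exact hdvd_of 5 (by norm_num) ((Nat.prime_five).dvd_of_dvd_pow ha2) h5b
  exact ⟨hab, hac, hbc, h5a, h5b⟩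
end

section
/- Let (α,β,γ,λ) be one of (1,1,1,3), (1,1,2,4), (1,2,3,6), (1,1,5,5), and let (a,b,c) be a triple of positive integers with α·a² + β·b² + γ·c² = λ·a·b·c. Then there exists an integer q with gcd(q,c) = 1 such that β·b² ≡ α·a²·(γ·c·q − 1) (mod γ·c²). (This is the arithmetic statement that the cyclic quotient singularity (1/γc²)(αa², βb²) of the corresponding weighted projective plane is of type (1/γc²)(1, γcq − 1) with gcd(q,c) = 1, i.e. a T-singularity.) -/
private lemma cop_sub {x c : ℤ} (t : ℤ) (h : IsCoprime x c) : IsCoprime (t*c - x) c := by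
  rw [show t*c - x = -x + c*t by ring]; exact h.neg_left.add_mul_left_left t

private lemma cop_sub' {a c' : ℤ} (t : ℤ) (h : IsCoprime a c') : IsCoprime a (t*a - c') := by
  rw [show t*a - c' = -c' + a*t by ring]; exact h.neg_right.add_mul_left_right t

private lemma descent_s11 (β γ lam Lb μ : ℤ) (hβ : lam = β * Lb) (hγ : lam = γ * μ)
    (hbpos : 0 < β) (hgpos : 0 < γ)
    (hmin : ∀ a b c : ℤ, 0 < a → 0 < b → 0 < c → a^2 + β*b^2 + γ*c^2 = lam*a*b*c →
      2*a ≤ lam*b*c → 2*b ≤ Lb*a*c → 2*c ≤ μ*a*b →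
      IsCoprime a c ∧ IsCoprime b c ∧ IsCoprime μ c) :
    ∀ n : ℕ, ∀ a b c : ℤ, 0 < a → 0 < b → 0 < c → a + b + c ≤ (n:ℤ) →
      a^2 + β*b^2 + γ*c^2 = lam*a*b*c →
      IsCoprime a c ∧ IsCoprime b c ∧ IsCoprime μ c := by
  intro n
  induction n using Nat.strong_induction_on with
  | _ n IH =>
  intro a b c ha hb hc hn heq
  have hn3 : (3:ℤ) ≤ (n:ℤ) := by linarith
  have hnn : 3 ≤ n := by exact_mod_cast hn3
  have hcast : ((n-1 : ℕ):ℤ) = (n:ℤ) - 1 := by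
    have : (1:ℕ) ≤ n := by omega
    push_cast [this]; ring
  by_cases h1 : lam*b*c - a < a
  · -- jump in a
    have hpos : 0 < a * (lam*b*c - a) := by
      nlinarith [sq_nonneg b, sq_nonneg c, mul_pos hb hb, mul_pos hc hc]
    have hx : 0 < lam*b*c - a := by
      by_contra hx; push_neg at hx
      nlinarith [mul_nonneg ha.le (neg_nonneg.2 hx)]
    obtain ⟨hac, hbc, hmc⟩ := IH (n-1) (by omega) (lam*b*c - a) b c hx hb hc
      (by rw [hcast]; linarith) (by linear_combination heq)
    refine ⟨?_, hbc, hmc⟩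
    have h2 := cop_sub (lam*b) hac
    rw [show lam*b*c - (lam*b*c - a) = a by ring] at h2
    exact h2
  by_cases h2 : Lb*a*c - b < b
  · -- jump in b
    have hpos : 0 < b * (Lb*a*c - b) := by
      have : β * (b * (Lb*a*c - b)) = a^2 + γ*c^2 := by
        linear_combination (-1)*heq + (-(a*b*c))*hβ
      nlinarith [sq_nonneg a, sq_nonneg c, mul_pos ha ha, mul_pos hc hc]
    have hx : 0 < Lb*a*c - b := by
      by_contra hx; push_neg at hx
      nlinarith [mul_nonneg hb.le (neg_nonneg.2 hx)]
    obtain ⟨hac, hbc, hmc⟩ := IH (n-1) (by omega) a (Lb*a*c - b) c ha hx hc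
      (by rw [hcast]; linarith) (by linear_combination heq - a*c*(Lb*a*c - 2*b)*hβ)
    refine ⟨hac, ?_, hmc⟩
    have h3 := cop_sub (Lb*a) hbc
    rw [show Lb*a*c - (Lb*a*c - b) = b by ring] at h3
    exact h3
  by_cases h3 : μ*a*b - c < c
  · -- jump in c
    have hpos : 0 < c * (μ*a*b - c) := by
      have : γ * (c * (μ*a*b - c)) = a^2 + β*b^2 := by
        linear_combination (-1)*heq + (-(a*b*c))*hγ
      nlinarith [sq_nonneg a, sq_nonneg b, mul_pos ha ha, mul_pos hb hb]
    have hx : 0 < μ*a*b - c := by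
      by_contra hx; push_neg at hx
      nlinarith [mul_nonneg hc.le (neg_nonneg.2 hx)]
    obtain ⟨hac, hbc, hmc⟩ := IH (n-1) (by omega) a b (μ*a*b - c) ha hb hx
      (by rw [hcast]; linarith) (by linear_combination heq - a*b*(μ*a*b - 2*c)*hγ)
    refine ⟨?_, ?_, ?_⟩
    · have h4 := cop_sub' (μ*b) hac
      rw [show μ*b*a - (μ*a*b - c) = c by ring] at h4
      exact h4
    · have h4 := cop_sub' (μ*a) hbc
      rw [show μ*a*b - (μ*a*b - c) = c by ring] at h4
      exact h4
    · have h4 := cop_sub' (a*b) hmc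
      rw [show a*b*μ - (μ*a*b - c) = c by ring] at h4
      exact h4
  · push_neg at h1 h2 h3
    exact hmin a b c ha hb hc heq (by linarith) (by linarith) (by linarith)

-- minimal region, eq (1,1,1,3)
private lemma m1max (a b c : ℤ) (ha : 0 < a) (hb : 0 < b) (hc : 0 < c)
    (heq : a^2 + b^2 + c^2 = 3*a*b*c)
    (r1 : 2*a ≤ 3*b*c) (hba : b ≤ a) (hca : c ≤ a) :
    a ≤ 2 ∧ b ≤ 2 ∧ c ≤ 2 := by
  have e1 : a^2 ≤ b^2 + c^2 := by nlinarith
  have key : 3*b*c ≤ 2*b + 2*c := by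
    nlinarith [mul_le_mul_of_nonneg_left hba hb.le, mul_le_mul_of_nonneg_left hca hc.le, ha]
  have hc2 : c ≤ 2 := by nlinarith
  have hb2 : b ≤ 2 := by nlinarith
  have ha2 : a ≤ 2 := by nlinarith
  exact ⟨ha2, hb2, hc2⟩

private lemma min1 (a b c : ℤ) (ha : 0 < a) (hb : 0 < b) (hc : 0 < c)
    (heq : a^2 + 1*b^2 + 1*c^2 = 3*a*b*c)
    (r1 : 2*a ≤ 3*b*c) (r2 : 2*b ≤ 3*a*c) (r3 : 2*c ≤ 3*a*b) :
    a = 1 ∧ b = 1 ∧ c = 1 := by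
  have hbnd : a ≤ 2 ∧ b ≤ 2 ∧ c ≤ 2 := by
    rcases le_total a b with h | h
    · rcases le_total b c with h' | h'
      · obtain ⟨x, y, z⟩ := m1max c b a hc hb ha (by linear_combination heq)
          (by linarith [r3]) h' (h.trans h')
        exact ⟨z, y, x⟩
      · obtain ⟨x, y, z⟩ := m1max b a c hb ha hc (by linear_combination heq)
          (by linarith [r2]) h h'
        exact ⟨y, x, z⟩
    · rcases le_total a c with h' | h'
      · obtain ⟨x, y, z⟩ := m1max c b a hc hb ha (by linear_combination heq)
          (by linarith [r3]) (h.trans h') h'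
        exact ⟨z, y, x⟩
      · exact m1max a b c ha hb hc (by linear_combination heq) r1 h h'
  obtain ⟨u1,u2,u3⟩ := hbnd
  interval_cases a <;> interval_cases b <;> interval_cases c <;> omega

-- minimal region, eq (1,1,2,4)
private lemma m2maxA (a b c : ℤ) (ha : 0 < a) (hb : 0 < b) (hc : 0 < c)
    (heq : a^2 + b^2 + 2*c^2 = 4*a*b*c)
    (r1 : 2*a ≤ 4*b*c) (hba : b ≤ a) (hca : c ≤ a) :
    a ≤ 2 ∧ b ≤ 2 ∧ c ≤ 2 := by
  have e1 : a^2 ≤ b^2 + 2*c^2 := by nlinarith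
  have key : 4*b*c ≤ 2*b + 4*c := by
    nlinarith [mul_le_mul_of_nonneg_left hba hb.le, mul_le_mul_of_nonneg_left hca hc.le, ha]
  have hb2 : b ≤ 2 := by nlinarith
  interval_cases b
  · have hc1 : c ≤ 1 := by
      nlinarith [mul_nonneg (by linarith : (0:ℤ) ≤ 2*c - a) (by linarith : (0:ℤ) ≤ a - c)]
    exact ⟨by linarith, by norm_num, by linarith⟩
  · have hc1 : c ≤ 1 := by linarith
    exact ⟨by nlinarith, by norm_num, by linarith⟩

private lemma m2maxC (a b c : ℤ) (ha : 0 < a) (hb : 0 < b) (hc : 0 < c)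
    (heq : a^2 + b^2 + 2*c^2 = 4*a*b*c)
    (r3 : 2*c ≤ 2*a*b) (hac : a ≤ c) (hbc : b ≤ c) :
    a ≤ 2 ∧ b ≤ 2 ∧ c ≤ 2 := by
  have e3 : 2*c^2 ≤ a^2 + b^2 := by nlinarith
  have key : 2*a*b ≤ a + b := by
    nlinarith [mul_le_mul_of_nonneg_left hac ha.le, mul_le_mul_of_nonneg_left hbc hb.le, hc]
  have ha1 : a ≤ 1 := by nlinarith
  have hb1 : b ≤ 1 := by nlinarith
  have ha1' : a = 1 := by omega
  have hb1' : b = 1 := by omega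
  subst ha1' hb1'
  have : c ≤ 1 := by nlinarith [sq_nonneg (c-1)]
  exact ⟨by norm_num, by norm_num, by linarith⟩

private lemma min2 (a b c : ℤ) (ha : 0 < a) (hb : 0 < b) (hc : 0 < c)
    (heq : a^2 + 1*b^2 + 2*c^2 = 4*a*b*c)
    (r1 : 2*a ≤ 4*b*c) (r2 : 2*b ≤ 4*a*c) (r3 : 2*c ≤ 2*a*b) :
    a = 1 ∧ b = 1 ∧ c = 1 := by
  have hbnd : a ≤ 2 ∧ b ≤ 2 ∧ c ≤ 2 := by
    rcases le_total a b with h | h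
    · rcases le_total b c with h' | h'
      · exact m2maxC a b c ha hb hc (by linear_combination heq) r3 (h.trans h') h'
      · obtain ⟨x, y, z⟩ := m2maxA b a c hb ha hc (by linear_combination heq)
          (by linarith [r2]) h h'
        exact ⟨y, x, z⟩
    · rcases le_total a c with h' | h'
      · exact m2maxC a b c ha hb hc (by linear_combination heq) r3 h' (h.trans h')
      · exact m2maxA a b c ha hb hc (by linear_combination heq) r1 h h'
  obtain ⟨u1,u2,u3⟩ := hbnd
  interval_cases a <;> interval_cases b <;> interval_cases c <;> omega

-- minimal region, eq (1,2,3,6)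
private lemma m3maxA (a b c : ℤ) (ha : 0 < a) (hb : 0 < b) (hc : 0 < c)
    (heq : a^2 + 2*b^2 + 3*c^2 = 6*a*b*c)
    (r1 : 2*a ≤ 6*b*c) (hba : b ≤ a) (hca : c ≤ a) :
    a ≤ 4 ∧ b ≤ 4 ∧ c ≤ 4 := by
  have e1 : a^2 ≤ 2*b^2 + 3*c^2 := by nlinarith
  have key : 6*b*c ≤ 4*b + 6*c := by
    nlinarith [mul_le_mul_of_nonneg_left hba hb.le, mul_le_mul_of_nonneg_left hca hc.le, ha]
  have hb3 : b ≤ 3 := by nlinarith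
  interval_cases b
  · have hac : a*c ≤ 1 := by
      nlinarith [mul_nonneg (by linarith : (0:ℤ) ≤ 3*c - a) (by linarith : (0:ℤ) ≤ a - c)]
    have hc1 : c ≤ 1 := by nlinarith
    exact ⟨by linarith, by norm_num, by linarith⟩
  · have hc1 : c ≤ 1 := by linarith
    exact ⟨by nlinarith, by norm_num, by linarith⟩
  · have hc1 : c ≤ 1 := by linarith
    exact ⟨by nlinarith, by norm_num, by linarith⟩

private lemma m3maxB (a b c : ℤ) (ha : 0 < a) (hb : 0 < b) (hc : 0 < c)
    (heq : a^2 + 2*b^2 + 3*c^2 = 6*a*b*c)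
    (r2 : 2*b ≤ 3*a*c) (hab : a ≤ b) (hcb : c ≤ b) :
    a ≤ 4 ∧ b ≤ 4 ∧ c ≤ 4 := by
  have e2 : 2*b^2 ≤ a^2 + 3*c^2 := by nlinarith
  have key : 6*a*c ≤ 2*a + 6*c := by
    nlinarith [mul_le_mul_of_nonneg_left hab ha.le, mul_le_mul_of_nonneg_left hcb hc.le, hb]
  have ha1 : a ≤ 1 := by nlinarith
  have ha1' : a = 1 := by omega
  subst ha1'
  have hbc : b*c ≤ 1 := by
    nlinarith [mul_nonneg (by linarith : (0:ℤ) ≤ 3*c - 2*b) (by linarith : (0:ℤ) ≤ b - c)]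
  have hb1 : b ≤ 1 := by nlinarith
  exact ⟨by norm_num, by linarith, by linarith⟩

private lemma m3maxC (a b c : ℤ) (ha : 0 < a) (hb : 0 < b) (hc : 0 < c)
    (heq : a^2 + 2*b^2 + 3*c^2 = 6*a*b*c)
    (r3 : 2*c ≤ 2*a*b) (hac : a ≤ c) (hbc : b ≤ c) :
    a ≤ 4 ∧ b ≤ 4 ∧ c ≤ 4 := by
  have e3 : 3*c^2 ≤ a^2 + 2*b^2 := by nlinarith
  have key : 6*a*b ≤ 2*a + 4*b := by
    nlinarith [mul_le_mul_of_nonneg_left hac ha.le, mul_le_mul_of_nonneg_left hbc hb.le, hc]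
  have ha1 : a ≤ 1 := by nlinarith
  have hb1 : b ≤ 1 := by nlinarith
  have ha1' : a = 1 := by omega
  have hb1' : b = 1 := by omega
  subst ha1' hb1'
  have hc1 : c ≤ 1 := by nlinarith [sq_nonneg (c-1)]
  exact ⟨by norm_num, by norm_num, by linarith⟩

private lemma min3 (a b c : ℤ) (ha : 0 < a) (hb : 0 < b) (hc : 0 < c)
    (heq : a^2 + 2*b^2 + 3*c^2 = 6*a*b*c)
    (r1 : 2*a ≤ 6*b*c) (r2 : 2*b ≤ 3*a*c) (r3 : 2*c ≤ 2*a*b) :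
    a = 1 ∧ b = 1 ∧ c = 1 := by
  have hbnd : a ≤ 4 ∧ b ≤ 4 ∧ c ≤ 4 := by
    rcases le_total a b with h | h
    · rcases le_total b c with h' | h'
      · exact m3maxC a b c ha hb hc heq r3 (h.trans h') h'
      · exact m3maxB a b c ha hb hc heq r2 h h'
    · rcases le_total a c with h' | h'
      · exact m3maxC a b c ha hb hc heq r3 h' (h.trans h')
      · exact m3maxA a b c ha hb hc heq r1 h h'
  obtain ⟨u1,u2,u3⟩ := hbnd
  interval_cases a <;> interval_cases b <;> interval_cases c <;> omega

-- minimal region, eq (1,1,5,5)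
private lemma m4maxA (a b c : ℤ) (ha : 0 < a) (hb : 0 < b) (hc : 0 < c)
    (heq : a^2 + b^2 + 5*c^2 = 5*a*b*c)
    (r1 : 2*a ≤ 5*b*c) (r3 : 2*c ≤ a*b) (hba : b ≤ a) (hca : c ≤ a) :
    a ≤ 4 ∧ b ≤ 4 ∧ c ≤ 4 := by
  have e1 : a^2 ≤ b^2 + 5*c^2 := by nlinarith
  have key : 5*b*c ≤ 2*b + 10*c := by
    nlinarith [mul_le_mul_of_nonneg_left hba hb.le, mul_le_mul_of_nonneg_left hca hc.le, ha]
  have hb3 : b ≤ 3 := by nlinarith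
  interval_cases b
  · have hac : a*c ≤ 2 := by
      nlinarith [mul_nonneg (by linarith : (0:ℤ) ≤ 5*c - 2*a) (by linarith : (0:ℤ) ≤ a - 2*c)]
    have hc1 : c ≤ 1 := by nlinarith
    exact ⟨by linarith, by norm_num, by linarith⟩
  · exfalso
    nlinarith [mul_nonneg (by linarith : (0:ℤ) ≤ 5*c - a) (by linarith : (0:ℤ) ≤ a - c)]
  · have hc1 : c ≤ 1 := by linarith
    exact ⟨by nlinarith, by norm_num, by linarith⟩

private lemma m4maxC (a b c : ℤ) (ha : 0 < a) (hb : 0 < b) (hc : 0 < c)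
    (heq : a^2 + b^2 + 5*c^2 = 5*a*b*c)
    (r3 : 2*c ≤ a*b) (hac : a ≤ c) (hbc : b ≤ c) : False := by
  have e3 : 5*c^2 ≤ a^2 + b^2 := by nlinarith [mul_le_mul_of_nonneg_left r3 hc.le]
  have key : 5*a*b ≤ 2*a + 2*b := by
    nlinarith [mul_le_mul_of_nonneg_left hac ha.le, mul_le_mul_of_nonneg_left hbc hb.le, hc]
  nlinarith [mul_pos ha hb]

private lemma min4 (a b c : ℤ) (ha : 0 < a) (hb : 0 < b) (hc : 0 < c)
    (heq : a^2 + b^2 + 5*c^2 = 5*a*b*c)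
    (r1 : 2*a ≤ 5*b*c) (r2 : 2*b ≤ 5*a*c) (r3 : 2*c ≤ a*b) :
    (a = 1 ∧ b = 2 ∧ c = 1) ∨ (a = 2 ∧ b = 1 ∧ c = 1) := by
  have hbnd : a ≤ 4 ∧ b ≤ 4 ∧ c ≤ 4 := by
    rcases le_total a b with h | h
    · rcases le_total b c with h' | h'
      · exact absurd (m4maxC a b c ha hb hc heq r3 (h.trans h') h') (by simp)
      · obtain ⟨x, y, z⟩ := m4maxA b a c hb ha hc (by linear_combination heq)
          (by linarith [r2]) (by linarith [r3]) h h'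
        exact ⟨y, x, z⟩
    · rcases le_total a c with h' | h'
      · exact absurd (m4maxC a b c ha hb hc heq r3 h' (h.trans h')) (by simp)
      · exact m4maxA a b c ha hb hc heq r1 r3 h h'
  obtain ⟨u1,u2,u3⟩ := hbnd
  interval_cases a <;> interval_cases b <;> interval_cases c <;> omega

private lemma build (β γ μ a b c : ℤ)
    (heq : a^2 + β*b^2 + γ*c^2 = γ*μ*a*b*c)
    (hac : IsCoprime a c) (hbc : IsCoprime b c) (hmc : IsCoprime μ c) :
    ∃ q : ℤ, IsCoprime q c ∧ β * b ^ 2 ≡ 1 * a ^ 2 * (γ * c * q - 1) [ZMOD γ * c ^ 2] := by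
  obtain ⟨u, v, huv⟩ := hac
  refine ⟨μ*b*a*u^2, ?_, ?_⟩
  · have huc : IsCoprime u c := ⟨a, v, by linear_combination huv⟩
    have hac' : IsCoprime a c := ⟨u, v, by linear_combination huv⟩
    exact ((hmc.mul_left hbc).mul_left hac').mul_left (huc.pow_left)
  · refine Int.modEq_iff_dvd.mpr ⟨1 - v*μ*a*b*(a*u+1), ?_⟩
    linear_combination (-1)*heq + (γ*μ*a*b*c*(a*u+1))*huv

/-- For each of the four Markov-type equations `α a² + β b² + γ c² = λ a b c`
with `(α,β,γ,λ) ∈ {(1,1,1,3), (1,1,2,4), (1,2,3,6), (1,1,5,5)}` and each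
positive integer solution `(a,b,c)`, there is an integer `q` coprime to `c`
with `β b² ≡ α a² (γ c q − 1) (mod γ c²)`: the singularity
`(1/γc²)(αa², βb²)` of `ℙ(αa², βb², γc²)` is of type `(1/γc²)(1, γcq − 1)`,
i.e. a `T`-singularity. -/
theorem stmt_11 (α β γ lam a b c : ℤ)
    (h : (α, β, γ, lam) = (1, 1, 1, 3) ∨ (α, β, γ, lam) = (1, 1, 2, 4) ∨
         (α, β, γ, lam) = (1, 2, 3, 6) ∨ (α, β, γ, lam) = (1, 1, 5, 5))
    (ha : 0 < a) (hb : 0 < b) (hc : 0 < c)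
    (heq : α * a ^ 2 + β * b ^ 2 + γ * c ^ 2 = lam * a * b * c) :
    ∃ q : ℤ, IsCoprime q c ∧
      β * b ^ 2 ≡ α * a ^ 2 * (γ * c * q - 1) [ZMOD γ * c ^ 2] := by
  have hsum : a + b + c ≤ ((a+b+c).toNat : ℤ) := Int.self_le_toNat _
  simp only [Prod.mk.injEq] at h
  rcases h with ⟨rfl, rfl, rfl, rfl⟩ | ⟨rfl, rfl, rfl, rfl⟩ | ⟨rfl, rfl, rfl, rfl⟩ |
    ⟨rfl, rfl, rfl, rfl⟩
  · obtain ⟨hac, hbc, hmc⟩ := descent_s11 1 1 3 3 3 (by norm_num) (by norm_num) one_pos one_pos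
      (fun a b c ha hb hc heq r1 r2 r3 => by
        obtain ⟨rfl, rfl, rfl⟩ := min1 a b c ha hb hc (by linear_combination heq) r1 r2 r3
        exact ⟨isCoprime_one_right, isCoprime_one_right, isCoprime_one_right⟩)
      (a+b+c).toNat a b c ha hb hc hsum (by linear_combination heq)
    exact build 1 1 3 a b c (by linear_combination heq) hac hbc hmc
  · obtain ⟨hac, hbc, hmc⟩ := descent_s11 1 2 4 4 2 (by norm_num) (by norm_num) one_pos two_pos
      (fun a b c ha hb hc heq r1 r2 r3 => by
        obtain ⟨rfl, rfl, rfl⟩ := min2 a b c ha hb hc (by linear_combination heq) r1 r2 r3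
        exact ⟨isCoprime_one_right, isCoprime_one_right, isCoprime_one_right⟩)
      (a+b+c).toNat a b c ha hb hc hsum (by linear_combination heq)
    exact build 1 2 2 a b c (by linear_combination heq) hac hbc hmc
  · obtain ⟨hac, hbc, hmc⟩ := descent_s11 2 3 6 3 2 (by norm_num) (by norm_num) two_pos (by norm_num)
      (fun a b c ha hb hc heq r1 r2 r3 => by
        obtain ⟨rfl, rfl, rfl⟩ := min3 a b c ha hb hc (by linear_combination heq) r1 r2 r3
        exact ⟨isCoprime_one_right, isCoprime_one_right, isCoprime_one_right⟩)
      (a+b+c).toNat a b c ha hb hc hsum (by linear_combination heq)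
    exact build 2 3 2 a b c (by linear_combination heq) hac hbc hmc
  · obtain ⟨hac, hbc, hmc⟩ := descent_s11 1 5 5 5 1 (by norm_num) (by norm_num) one_pos (by norm_num)
      (fun a b c ha hb hc heq r1 r2 r3 => by
        rcases min4 a b c ha hb hc (by linear_combination heq) r1 r2 (by linarith [r3]) with
          ⟨rfl, rfl, rfl⟩ | ⟨rfl, rfl, rfl⟩ <;>
        exact ⟨isCoprime_one_right, isCoprime_one_right, isCoprime_one_right⟩)
      (a+b+c).toNat a b c ha hb hc hsum (by linear_combination heq)
    exact build 1 5 1 a b c (by linear_combination heq) hac hbc hmc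
end

section
/- Let [b₁,…,b_r] and [c₁,…,c_s] be strings with values n/a and n/(n−a) respectively, where 0 < a < n and gcd(a,n) = 1. Then the string [b₁+1, b₂,…,b_r] has value (n+a)/a and the string [2, c₁,…,c_s] has value (n+a)/n; in particular these two strings are again conjugate. -/
/-- The value of the Hirzebruch–Jung continued fraction
`[b₁,…,b_r] = b₁ − 1/(b₂ − 1/(⋯ − 1/b_r))`.
(For the empty list we set the value to `0`; since `1/0 = 0` in `ℚ`, the
recursion then gives the correct value `b_r` for singleton lists.) -/
def hjValue : List ℤ → ℚ
  | [] => 0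
  | b :: l => (b : ℚ) - 1 / hjValue l

/-- A string is a nonempty list of integers, each at least `2`. -/
def IsString (l : List ℤ) : Prop := l ≠ [] ∧ ∀ b ∈ l, 2 ≤ b

/-- Two strings are conjugate if their Hirzebruch–Jung continued fraction
values are `n/a` and `n/(n−a)` for some integers `0 < a < n` with
`gcd(a,n) = 1`. -/
def Conjugate (l l' : List ℤ) : Prop :=
  ∃ n a : ℤ, 0 < a ∧ a < n ∧ IsCoprime a n ∧
    hjValue l = (n : ℚ) / (a : ℚ) ∧ hjValue l' = (n : ℚ) / ((n : ℚ) - (a : ℚ))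

/-- If `[b₁,…,b_r]` and `[c₁,…,c_s]` are strings with values `n/a` and
`n/(n−a)` (where `0 < a < n`, `gcd(a,n) = 1`), then `[b₁+1, b₂,…,b_r]` has
value `(n+a)/a` and `[2, c₁,…,c_s]` has value `(n+a)/n`; in particular these
two strings are again conjugate. -/
theorem stmt_12 (b : ℤ) (bs cs : List ℤ) (n a : ℤ)
    (hstr1 : IsString (b :: bs)) (hstr2 : IsString cs)
    (ha : 0 < a) (han : a < n) (hcop : IsCoprime a n)
    (hv1 : hjValue (b :: bs) = (n : ℚ) / (a : ℚ))
    (hv2 : hjValue cs = (n : ℚ) / ((n : ℚ) - (a : ℚ))) :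
    hjValue ((b + 1) :: bs) = ((n : ℚ) + (a : ℚ)) / (a : ℚ) ∧
      hjValue (2 :: cs) = ((n : ℚ) + (a : ℚ)) / (n : ℚ) ∧
      Conjugate ((b + 1) :: bs) (2 :: cs) := by
  have haQ : (a : ℚ) ≠ 0 := Int.cast_ne_zero.mpr ha.ne'
  have hnpos : 0 < n := ha.trans han
  have hnQ : (n : ℚ) ≠ 0 := Int.cast_ne_zero.mpr hnpos.ne'
  have hnaQ : (n : ℚ) - (a : ℚ) ≠ 0 := by
    have : (a : ℚ) < (n : ℚ) := by exact_mod_cast han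
    linarith
  have h1 : hjValue ((b + 1) :: bs) = ((n : ℚ) + (a : ℚ)) / (a : ℚ) := by
    have := hv1
    simp only [hjValue] at this ⊢
    push_cast
    field_simp at this ⊢
    linarith
  have h2 : hjValue (2 :: cs) = ((n : ℚ) + (a : ℚ)) / (n : ℚ) := by
    simp only [hjValue, hv2]
    rw [one_div_div]
    field_simp
    ring
  refine ⟨h1, h2, n + a, a, ha, by linarith, ?_, ?_, ?_⟩
  · have := hcop.add_mul_right_right 1
    simpa using this
  · push_cast; exact h1
  · push_cast; rw [h2]; ring_nf
end

section
/- Every ordered pair of conjugate strings is obtained from the pair ([2],[2]) by a finite sequence of the two steps ([b₁,…,b_r],[c₁,…,c_s]) ↦ ([b₁+1, b₂,…,b_r],[2, c₁,…,c_s]) and ([b₁,…,b_r],[c₁,…,c_s]) ↦ ([2, b₁,…,b_r],[c₁+1, c₂,…,c_s]); conversely, every pair obtained from ([2],[2]) by such steps is a conjugate pair. -/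
/-- One step in the construction of conjugate pairs of strings: either add `1`
to the first entry of the first string and prepend `2` to the second string,
or vice versa. -/
def StepPair (p q : List ℤ × List ℤ) : Prop :=
  (∃ b bs cs, p = (b :: bs, cs) ∧ q = ((b + 1) :: bs, 2 :: cs)) ∨
  (∃ bs c cs, p = (bs, c :: cs) ∧ q = (2 :: bs, (c + 1) :: cs))

/-!
Write `x` and `y` for the values of the two strings. For `x > 1`, conjugacy says exactly
`(x - 1) * (y - 1) = 1`, a relation symmetric in `x` and `y`, and the second kind of step is
the mirror image of the first under swapping the two strings. The first step sends
`x ↦ x + 1` and `y ↦ 2 - 1 / y`, which preserves the relation (and, for `y ≠ 0`, reflects it).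

Conversely, let a conjugate pair have `x > 2`. Then `y < 2`; since the first entry of a string
is the ceiling of its value, the second string is `2 :: cs` with `cs` nonempty and the first
starts with an entry `≥ 3`, so undoing a first step gives a shorter conjugate pair. The case
`x < 2` is the mirror image, and `x = 2` forces the pair `([2], [2])`.
-/

lemma hjValue_cons (b : ℤ) (l : List ℤ) : hjValue (b :: l) = b - 1 / hjValue l := rfl

lemma hjValue_singleton (b : ℤ) : hjValue [b] = b := by
  simp [hjValue]

lemma isString_cons_iff {b : ℤ} {l : List ℤ} :
    IsString (b :: l) ↔ 2 ≤ b ∧ ∀ c ∈ l, 2 ≤ c := by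
  simp [IsString]

lemma IsString.tail {b : ℤ} {l : List ℤ} (h : IsString (b :: l)) (hl : l ≠ []) : IsString l :=
  ⟨hl, (isString_cons_iff.mp h).2⟩

lemma hjValue_cons_mem_Ioc :
    ∀ {l : List ℤ} {b : ℤ}, IsString (b :: l) → hjValue (b :: l) ∈ Set.Ioc ((b : ℚ) - 1) b
  | [], b, _ => by simp [hjValue_singleton]
  | c :: l, b, h => by
    obtain ⟨hc, -⟩ := hjValue_cons_mem_Ioc (h.tail (List.cons_ne_nil c l))
    have hc2 : (2 : ℚ) ≤ c := by exact_mod_cast (isString_cons_iff.mp h).2 c (by simp)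
    have hinv : 0 < 1 / hjValue (c :: l) ∧ 1 / hjValue (c :: l) < 1 :=
      ⟨by apply div_pos <;> linarith, by rw [div_lt_one (by linarith)]; linarith⟩
    rw [hjValue_cons, Set.mem_Ioc]
    constructor <;> linarith

lemma one_lt_hjValue {l : List ℤ} (h : IsString l) : 1 < hjValue l := by
  obtain ⟨b, l, rfl⟩ := List.exists_cons_of_ne_nil h.1
  have hb : (2 : ℚ) ≤ b := by exact_mod_cast (isString_cons_iff.mp h).1
  linarith [(hjValue_cons_mem_Ioc h).1]

lemma hjValue_ne_zero {l : List ℤ} (h : IsString l) : hjValue l ≠ 0 :=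
  (zero_lt_one.trans (one_lt_hjValue h)).ne'

lemma hjValue_cons_lt {b : ℤ} {l : List ℤ} (h : IsString (b :: l)) (hl : l ≠ []) :
    hjValue (b :: l) < b := by
  rw [hjValue_cons, sub_lt_self_iff, one_div_pos]
  linarith [one_lt_hjValue (h.tail hl)]

lemma ceil_hjValue_cons {b : ℤ} {l : List ℤ} (h : IsString (b :: l)) :
    ⌈hjValue (b :: l)⌉ = b := by
  obtain ⟨hlt, hle⟩ := hjValue_cons_mem_Ioc h
  exact Int.ceil_eq_iff.mpr ⟨by exact_mod_cast hlt, hle⟩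

lemma eq_singleton_two_of_hjValue_eq_two {l : List ℤ} (h : IsString l) (hl : hjValue l = 2) :
    l = [2] := by
  obtain ⟨b, l, rfl⟩ := List.exists_cons_of_ne_nil h.1
  have hb : b = 2 := by rw [← ceil_hjValue_cons h, hl]; simp
  subst hb
  rcases eq_or_ne l [] with rfl | hne
  · rfl
  · have := hjValue_cons_lt h hne
    push_cast at this
    linarith

lemma conjugate_iff {l l' : List ℤ} (hl : 1 < hjValue l) :
    Conjugate l l' ↔ (hjValue l - 1) * (hjValue l' - 1) = 1 := by
  constructor
  · rintro ⟨n, a, ha, han, -, hx, hy⟩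
    have ha' : (0 : ℚ) < a := by exact_mod_cast ha
    have han' : (a : ℚ) < n := by exact_mod_cast han
    have hna : (n : ℚ) - a ≠ 0 := by linarith
    rw [hx, hy]
    field_simp
    ring
  · intro h
    set x := hjValue l
    have hden : (0 : ℚ) < x.den := by exact_mod_cast x.pos
    have hx : x = (x.num : ℚ) / (x.den : ℤ) := by push_cast; exact (Rat.num_div_den x).symm
    have hlt : (x.den : ℚ) < x.num := by
      rw [hx, one_lt_div (by exact_mod_cast hden)] at hl
      exact_mod_cast hl
    refine ⟨x.num, x.den, by exact_mod_cast x.pos, by exact_mod_cast hlt,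
      (Rat.isCoprime_num_den x).symm, hx, ?_⟩
    have hne : (x.num : ℚ) - x.den ≠ 0 := by linarith
    rw [hx] at h
    push_cast at h ⊢
    field_simp at h
    rw [eq_div_iff hne]
    linarith

def StepLeft (p q : List ℤ × List ℤ) : Prop :=
  ∃ b bs cs, p = (b :: bs, cs) ∧ q = ((b + 1) :: bs, 2 :: cs)

lemma stepPair_iff {p q : List ℤ × List ℤ} :
    StepPair p q ↔ StepLeft p q ∨ StepLeft p.swap q.swap := by
  constructor
  · rintro (⟨b, bs, cs, rfl, rfl⟩ | ⟨bs, c, cs, rfl, rfl⟩)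
    · exact .inl ⟨b, bs, cs, rfl, rfl⟩
    · exact .inr ⟨c, cs, bs, rfl, rfl⟩
  · rintro (⟨b, bs, cs, rfl, rfl⟩ | ⟨c, cs, bs, hp, hq⟩)
    · exact .inl ⟨b, bs, cs, rfl, rfl⟩
    · exact .inr ⟨bs, c, cs, by rw [← Prod.swap_swap p, hp]; rfl,
        by rw [← Prod.swap_swap q, hq]; rfl⟩

lemma StepLeft.stepPair {p q : List ℤ × List ℤ} (h : StepLeft p q) : StepPair p q :=
  stepPair_iff.mpr (.inl h)

lemma StepLeft.stepPair_swap {p q : List ℤ × List ℤ} (h : StepLeft p.swap q.swap) :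
    StepPair p q :=
  stepPair_iff.mpr (.inr h)

lemma StepLeft.length_lt {p q : List ℤ × List ℤ} (h : StepLeft p q) :
    p.1.length + p.2.length < q.1.length + q.2.length := by
  obtain ⟨b, bs, cs, rfl, rfl⟩ := h
  simp

lemma StepLeft.sub_one_mul_sub_one_eq_one_iff {p q : List ℤ × List ℤ} (h : StepLeft p q)
    (hp : hjValue p.2 ≠ 0) :
    (hjValue q.1 - 1) * (hjValue q.2 - 1) = 1 ↔ (hjValue p.1 - 1) * (hjValue p.2 - 1) = 1 := by
  obtain ⟨b, bs, cs, rfl, rfl⟩ := h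
  simp only [hjValue_cons] at hp ⊢
  push_cast
  field_simp
  constructor <;> intro h <;> linarith

def IsConjPair (p : List ℤ × List ℤ) : Prop :=
  IsString p.1 ∧ IsString p.2 ∧ (hjValue p.1 - 1) * (hjValue p.2 - 1) = 1

lemma isConjPair_iff {p : List ℤ × List ℤ} :
    IsConjPair p ↔ IsString p.1 ∧ IsString p.2 ∧ Conjugate p.1 p.2 :=
  and_congr_right fun h => and_congr_right fun _ => (conjugate_iff (one_lt_hjValue h)).symm

lemma IsConjPair.swap {p : List ℤ × List ℤ} (hp : IsConjPair p) : IsConjPair p.swap :=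
  ⟨hp.2.1, hp.1, by rw [Prod.fst_swap, Prod.snd_swap, mul_comm]; exact hp.2.2⟩

lemma IsConjPair.stepLeft {p q : List ℤ × List ℤ} (hp : IsConjPair p) (h : StepLeft p q) :
    IsConjPair q := by
  have hrel := (h.sub_one_mul_sub_one_eq_one_iff (hjValue_ne_zero hp.2.1)).mpr hp.2.2
  obtain ⟨b, bs, cs, rfl, rfl⟩ := h
  obtain ⟨hb, hbs⟩ := isString_cons_iff.mp hp.1
  exact ⟨isString_cons_iff.mpr ⟨by omega, hbs⟩, isString_cons_iff.mpr ⟨le_rfl, hp.2.1.2⟩,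
    hrel⟩

lemma IsConjPair.stepPair {p q : List ℤ × List ℤ} (hp : IsConjPair p) (h : StepPair p q) :
    IsConjPair q := by
  rcases stepPair_iff.mp h with h | h
  · exact hp.stepLeft h
  · simpa using (hp.swap.stepLeft h).swap

lemma IsConjPair.exists_stepLeft {p : List ℤ × List ℤ} (hp : IsConjPair p)
    (hx : 2 < hjValue p.1) : ∃ q, IsConjPair q ∧ StepLeft q p := by
  obtain ⟨l, l'⟩ := p
  obtain ⟨hl, hl', hrel⟩ := hp
  obtain ⟨b, bs, rfl⟩ := List.exists_cons_of_ne_nil hl.1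
  obtain ⟨c, cs, rfl⟩ := List.exists_cons_of_ne_nil hl'.1
  dsimp only at hx hrel
  have hy1 := one_lt_hjValue hl'
  have hy : hjValue (c :: cs) < 2 := by nlinarith
  have hb : 3 ≤ b := by
    rw [← ceil_hjValue_cons hl]
    exact Int.lt_ceil.mpr (by exact_mod_cast hx)
  have hc : c = 2 := by
    have := ceil_hjValue_cons hl'
    have : ⌈hjValue (c :: cs)⌉ ≤ 2 := Int.ceil_le.mpr (by exact_mod_cast hy.le)
    have := (isString_cons_iff.mp hl').1
    omega
  subst hc
  have hcs : cs ≠ [] := by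
    rintro rfl
    simp [hjValue_singleton] at hy
  have hstep : StepLeft ((b - 1) :: bs, cs) (b :: bs, 2 :: cs) := ⟨b - 1, bs, cs, rfl, by simp⟩
  refine ⟨_, ⟨isString_cons_iff.mpr ⟨by omega, (isString_cons_iff.mp hl).2⟩, hl'.tail hcs, ?_⟩,
    hstep⟩
  exact (hstep.sub_one_mul_sub_one_eq_one_iff (hjValue_ne_zero (hl'.tail hcs))).mp hrel

theorem IsConjPair.reflTransGen {p : List ℤ × List ℤ} (hp : IsConjPair p) :
    Relation.ReflTransGen StepPair ([2], [2]) p := by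
  have hx1 := one_lt_hjValue hp.1
  have hy1 := one_lt_hjValue hp.2.1
  rcases lt_trichotomy (hjValue p.1) 2 with hx | hx | hx
  · have hy : 2 < hjValue p.2 := by nlinarith [hp.2.2]
    obtain ⟨q, hq, hstep⟩ := hp.swap.exists_stepLeft hy
    have : q.2.length + q.1.length < p.1.length + p.2.length := by
      simpa [add_comm] using hstep.length_lt
    exact hq.swap.reflTransGen.tail (StepLeft.stepPair_swap (by simpa using hstep))
  · have hy : hjValue p.2 = 2 := by nlinarith [hp.2.2]
    rw [show p = ([2], [2]) from Prod.ext (eq_singleton_two_of_hjValue_eq_two hp.1 hx)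
      (eq_singleton_two_of_hjValue_eq_two hp.2.1 hy)]
  · obtain ⟨q, hq, hstep⟩ := hp.exists_stepLeft hx
    have := hstep.length_lt
    exact hq.reflTransGen.tail hstep.stepPair
termination_by p.1.length + p.2.length

/-- A pair of strings is conjugate if and only if it is obtained from the pair
`([2],[2])` by a finite sequence of the two steps
`([b₁,…,b_r],[c₁,…,c_s]) ↦ ([b₁+1, b₂,…,b_r],[2, c₁,…,c_s])` and
`([b₁,…,b_r],[c₁,…,c_s]) ↦ ([2, b₁,…,b_r],[c₁+1, c₂,…,c_s])`. -/
theorem stmt_13 (p : List ℤ × List ℤ) :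
    (IsString p.1 ∧ IsString p.2 ∧ Conjugate p.1 p.2) ↔
      Relation.ReflTransGen StepPair ([2], [2]) p := by
  rw [← isConjPair_iff]
  refine ⟨IsConjPair.reflTransGen, fun h => ?_⟩
  induction h with
  | refl => exact ⟨by simp [IsString], by simp [IsString], by norm_num [hjValue]⟩
  | tail _ hstep ih => exact ih.stepPair hstep
end

section
/- Let [b₁,…,b_r] be a string with value n/a where 0 < a < n and gcd(a,n) = 1. Then the reversed string [b_r,…,b₁] has value n/a', where a' is the unique integer with 0 < a' < n and a·a' ≡ 1 (mod n). -/
def hjP : List ℤ → ℤ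
  | [] => 1
  | [b] => b
  | b :: c :: t => b * hjP (c :: t) - hjP t

def hjN : List ℤ → ℤ
  | [] => 0
  | [_] => -1
  | b :: c :: t => b * hjN (c :: t) - hjN t

lemma hjDet : ∀ (l : List ℤ) (b : ℤ),
    hjP (b :: l) * hjN l - hjN (b :: l) * hjP l = 1 := by
  intro l
  induction l with
  | nil => intro b; simp [hjP, hjN]
  | cons c t ih =>
      intro b
      simp only [hjP, hjN]
      linear_combination ih c

lemma hjPos : ∀ (l : List ℤ), (∀ b ∈ l, 2 ≤ b) → l ≠ [] →
    1 ≤ hjP l.tail ∧ hjP l.tail < hjP l := by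
  intro l
  induction l with
  | nil => simp
  | cons b t ih =>
      intro h _
      have hb : 2 ≤ b := h b (by simp)
      match t with
      | [] => simp [hjP]; omega
      | c :: s =>
          have ih' := ih (fun x hx => h x (by simp [hx])) (by simp)
          simp only [List.tail_cons] at ih' ⊢
          simp only [hjP]
          constructor
          · omega
          · nlinarith [ih'.1, ih'.2]

lemma hjVal : ∀ (l : List ℤ), (∀ b ∈ l, 2 ≤ b) → l ≠ [] →
    hjValue l = (hjP l : ℚ) / (hjP l.tail : ℚ) := by
  intro l
  induction l with
  | nil => simp
  | cons b t ih =>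
      intro h _
      match t with
      | [] => simp [hjValue, hjP]
      | c :: s =>
          have h' : ∀ x ∈ c :: s, 2 ≤ x := fun x hx => h x (by simp [hx])
          have ih' := ih h' (by simp)
          have hpos := hjPos (c :: s) h' (by simp)
          have hq : (hjP (c :: s) : ℚ) ≠ 0 := by
            exact_mod_cast (by omega : hjP (c :: s) ≠ 0)
          have hq2 : (hjP (c :: s).tail : ℚ) ≠ 0 := by
            exact_mod_cast (by omega : hjP (c :: s).tail ≠ 0)
          show (b : ℚ) - 1 / hjValue (c :: s) = _
          rw [ih']
          show _ = ((hjP (b :: c :: s) : ℤ) : ℚ) / _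
          simp only [hjP, List.tail_cons]
          push_cast
          field_simp

lemma hjP_app (l : List ℤ) (b : ℤ) : hjP (l ++ [b]) = b * hjP l + hjN l ∧
    hjN (l ++ [b]) = - hjP l := by
  induction l using hjP.induct with
  | case1 => simp [hjP, hjN]
  | case2 c => refine ⟨?_, ?_⟩ <;> (simp [hjP, hjN]; try ring)
  | case3 c d t ih1 ih2 =>
      simp only [List.cons_append] at *
      constructor
      · show c * hjP (d :: (t ++ [b])) - hjP (t ++ [b]) = _
        rw [ih1.1, ih2.1]; simp only [hjP, hjN]; try ring
      · show c * hjN (d :: (t ++ [b])) - hjN (t ++ [b]) = _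
        rw [ih1.2, ih2.2]; simp only [hjP]; ring

lemma hjRev : ∀ (l : List ℤ), hjP l.reverse = hjP l ∧
    (l ≠ [] → hjN l.reverse = - hjP l.tail) := by
  intro l
  induction l with
  | nil => simp
  | cons b t ih =>
      have happ := hjP_app t.reverse b
      have hrev : (b :: t).reverse = t.reverse ++ [b] := by simp
      rw [hrev]
      match t with
      | [] => simp [hjP, hjN]
      | c :: s =>
          have ih1 := ih.1
          have ih2 := ih.2 (by simp)
          constructor
          · rw [happ.1, ih1, ih2]
            simp only [List.tail_cons, hjP]
            ring
          · intro _
            rw [happ.2, ih1]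
            simp only [List.tail_cons]

/-- If the string `[b₁,…,b_r]` has value `n/a` (with `0 < a < n`,
`gcd(a,n) = 1`), then the reversed string `[b_r,…,b₁]` has value `n/a'`,
where `a'` is the unique integer with `0 < a' < n` and `a a' ≡ 1 (mod n)`. -/
theorem stmt_14 (l : List ℤ) (hl : IsString l) (n a : ℤ)
    (ha : 0 < a) (han : a < n) (hcop : IsCoprime a n)
    (hv : hjValue l = (n : ℚ) / (a : ℚ)) :
    ∃ a' : ℤ, 0 < a' ∧ a' < n ∧ a * a' ≡ 1 [ZMOD n] ∧
      hjValue l.reverse = (n : ℚ) / (a' : ℚ) := by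
  obtain ⟨hne, h2⟩ := hl
  obtain ⟨b, t, rfl⟩ := List.exists_cons_of_ne_nil hne
  set p := hjP (b :: t) with hp
  set q := hjP t with hq
  set N := hjN (b :: t) with hN
  have hdet : p * hjN t - N * q = 1 := hjDet t b
  have hpos : 1 ≤ q ∧ q < p := by
    have := hjPos (b :: t) h2 (by simp)
    simpa using this
  have hval : hjValue (b :: t) = (p : ℚ) / (q : ℚ) := by
    have := hjVal (b :: t) h2 (by simp)
    simpa using this
  have hq0 : (q : ℚ) ≠ 0 := by exact_mod_cast (by omega : q ≠ 0)
  have ha0 : (a : ℚ) ≠ 0 := by exact_mod_cast (by omega : a ≠ 0)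
  have hcross : p * a = n * q := by
    have h1 : (p : ℚ) / (q : ℚ) = (n : ℚ) / (a : ℚ) := by rw [← hval, hv]
    have h2' : (p : ℚ) * a = n * q := by
      field_simp at h1; linear_combination h1
    exact_mod_cast h2'
  have hcopqp : IsCoprime q p := ⟨-N, hjN t, by linarith⟩
  have hqa : q = a := by
    have h1 : q ∣ a := hcopqp.dvd_of_dvd_mul_left ⟨n, by linarith⟩
    have h2' : a ∣ q := hcop.dvd_of_dvd_mul_left ⟨p, by linarith⟩
    exact Int.dvd_antisymm (by omega) (by omega) h1 h2'
  have hpn : p = n := by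
    have : p * a = n * a := by rw [hcross, hqa]
    exact mul_right_cancel₀ (by omega) this
  refine ⟨-N, ?_, ?_, ?_, ?_⟩
  · -- positivity of a' = -N
    have hrevN : N = - hjP ((b :: t).reverse).tail := by
      have := (hjRev ((b :: t).reverse)).2 (by simp)
      rw [List.reverse_reverse] at this
      exact this
    have hposr := hjPos ((b :: t).reverse) (by intro x hx; exact h2 x (List.mem_reverse.mp hx)) (by simp)
    omega
  · have hrevN : N = - hjP ((b :: t).reverse).tail := by
      have := (hjRev ((b :: t).reverse)).2 (by simp)
      rw [List.reverse_reverse] at this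
      exact this
    have hrevP : hjP ((b :: t).reverse) = p := (hjRev (b :: t)).1
    have hposr := hjPos ((b :: t).reverse) (by intro x hx; exact h2 x (List.mem_reverse.mp hx)) (by simp)
    omega
  · exact (Int.modEq_iff_dvd.mpr ⟨-hjN t, by rw [← hqa, ← hpn]; linarith⟩).symm
  · have hrevN : hjP ((b :: t).reverse).tail = -N := by
      have := (hjRev ((b :: t).reverse)).2 (by simp)
      rw [List.reverse_reverse] at this
      omega
    have hrevP : hjP ((b :: t).reverse) = p := (hjRev (b :: t)).1
    have := hjVal ((b :: t).reverse) (by intro x hx; exact h2 x (List.mem_reverse.mp hx)) (by simp)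
    rw [this, hrevN, hrevP, hpn]
end

section
/- If the strings [b₁,…,b_r] and [c₁,…,c_s] are conjugate, then the reversed strings [b_r,…,b₁] and [c_s,…,c₁] are also conjugate. -/
/-! The product `M` of the matrices `!![b, -1; 1, 0]` over a string has determinant `1`, and its
first column `(n, a)` is the value `n / a` in lowest terms. Each factor satisfies
`Xᵀ = S X S` with `S = diag(1, -1)`, so the reversed string has matrix `S Mᵀ S`, with first column
`(n, a')` where `a a' ≡ 1 [ZMOD n]` by the determinant. Passing to the conjugate replaces `a` by
`n - a ≡ -a`, hence `a'` by `n - a'`. -/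

open Matrix

def hjStep (b : ℤ) : Matrix (Fin 2) (Fin 2) ℤ := !![b, -1; 1, 0]

def hjMatrix (l : List ℤ) : Matrix (Fin 2) (Fin 2) ℤ := (l.map hjStep).prod

def signFlip : Matrix (Fin 2) (Fin 2) ℤ := !![1, 0; 0, -1]

@[simp] lemma hjMatrix_nil : hjMatrix [] = 1 := rfl

@[simp] lemma hjMatrix_cons (b : ℤ) (l : List ℤ) : hjMatrix (b :: l) = hjStep b * hjMatrix l :=
  List.prod_cons

lemma hjMatrix_append_singleton (l : List ℤ) (b : ℤ) :
    hjMatrix (l ++ [b]) = hjMatrix l * hjStep b := by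
  simp [hjMatrix]

lemma hjMatrix_cons_apply_zero_zero (b : ℤ) (l : List ℤ) :
    hjMatrix (b :: l) 0 0 = b * hjMatrix l 0 0 - hjMatrix l 1 0 := by
  simp [hjStep, Matrix.mul_apply, Fin.sum_univ_two, sub_eq_add_neg]

lemma hjMatrix_cons_apply_one_zero (b : ℤ) (l : List ℤ) :
    hjMatrix (b :: l) 1 0 = hjMatrix l 0 0 := by
  simp [hjStep, Matrix.mul_apply, Fin.sum_univ_two]

lemma det_hjStep (b : ℤ) : (hjStep b).det = 1 := by
  simp [hjStep, det_fin_two_of]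

lemma det_hjMatrix (l : List ℤ) : (hjMatrix l).det = 1 := by
  induction l with
  | nil => simp
  | cons b l ih => rw [hjMatrix_cons, det_mul, ih, det_hjStep, mul_one]

lemma signFlip_mul_self : signFlip * signFlip = 1 := by
  simp [signFlip, one_fin_two]

lemma hjStep_transpose (b : ℤ) : (hjStep b)ᵀ = signFlip * hjStep b * signFlip := by
  ext i j; fin_cases i <;> fin_cases j <;> simp [hjStep, signFlip]

lemma hjMatrix_reverse (l : List ℤ) :
    hjMatrix l.reverse = signFlip * (hjMatrix l)ᵀ * signFlip := by
  induction l with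
  | nil => simp [signFlip_mul_self]
  | cons b l ih =>
    rw [List.reverse_cons, hjMatrix_append_singleton, ih, hjMatrix_cons, transpose_mul,
      hjStep_transpose]
    simp only [Matrix.mul_assoc, signFlip_mul_self, Matrix.mul_one]

lemma hjMatrix_reverse_apply_zero_zero (l : List ℤ) :
    hjMatrix l.reverse 0 0 = hjMatrix l 0 0 := by
  simp [hjMatrix_reverse, signFlip, Matrix.mul_apply, vecMul, dotProduct, Fin.sum_univ_two]

lemma hjMatrix_reverse_apply_one_zero (l : List ℤ) :
    hjMatrix l.reverse 1 0 = -hjMatrix l 0 1 := by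
  simp [hjMatrix_reverse, signFlip, Matrix.mul_apply, vecMul, dotProduct, Fin.sum_univ_two]

lemma hjMatrix_apply_one_zero_bounds {l : List ℤ} (hl : ∀ b ∈ l, 2 ≤ b) :
    0 ≤ hjMatrix l 1 0 ∧ hjMatrix l 1 0 < hjMatrix l 0 0 := by
  induction l with
  | nil => simp
  | cons b l ih =>
    obtain ⟨hq, hqp⟩ := ih fun c hc => hl c (List.mem_cons_of_mem b hc)
    have hb : 2 ≤ b := hl b List.mem_cons_self
    rw [hjMatrix_cons_apply_zero_zero, hjMatrix_cons_apply_one_zero]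
    constructor <;> nlinarith

lemma IsString.hjMatrix_apply_one_zero_pos {l : List ℤ} (hl : IsString l) :
    0 < hjMatrix l 1 0 := by
  obtain ⟨hne, hl⟩ := hl
  obtain ⟨b, t, rfl⟩ := List.exists_cons_of_ne_nil hne
  rw [hjMatrix_cons_apply_one_zero]
  have := hjMatrix_apply_one_zero_bounds fun c hc => hl c (List.mem_cons_of_mem b hc)
  omega

lemma hjValue_eq_div {l : List ℤ} (hl : ∀ b ∈ l, 2 ≤ b) :
    hjValue l = hjMatrix l 0 0 / hjMatrix l 1 0 := by
  induction l with
  | nil => simp [hjValue]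
  | cons b l ih =>
    have hp : (hjMatrix l 0 0 : ℚ) ≠ 0 := by
      have := hjMatrix_apply_one_zero_bounds fun c hc => hl c (List.mem_cons_of_mem b hc)
      exact_mod_cast (by omega : hjMatrix l 0 0 ≠ 0)
    rw [hjValue, ih fun c hc => hl c (List.mem_cons_of_mem b hc),
      hjMatrix_cons_apply_zero_zero, hjMatrix_cons_apply_one_zero]
    field_simp
    push_cast
    ring

lemma IsString.reverse {l : List ℤ} (hl : IsString l) : IsString l.reverse :=
  ⟨by simpa using hl.1, fun b hb => hl.2 b (List.mem_reverse.mp hb)⟩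

lemma isCoprime_hjMatrix (l : List ℤ) : IsCoprime (hjMatrix l 0 0) (hjMatrix l 1 0) :=
  ⟨hjMatrix l 1 1, -hjMatrix l 0 1, by
    have := det_hjMatrix l
    rw [det_fin_two] at this
    linear_combination this⟩

lemma IsString.hjMatrix_first_col_eq_of_hjValue_eq {l : List ℤ} (hl : IsString l) {n a : ℤ}
    (ha : 0 < a) (hcop : IsCoprime n a) (hv : hjValue l = n / a) :
    hjMatrix l 0 0 = n ∧ hjMatrix l 1 0 = a :=
  Rat.div_int_inj hl.hjMatrix_apply_one_zero_pos ha
    (Int.isCoprime_iff_gcd_eq_one.mp (isCoprime_hjMatrix l))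
    (Int.isCoprime_iff_gcd_eq_one.mp hcop) ((hjValue_eq_div hl.2).symm.trans hv)

lemma IsString.exists_hjValue_reverse {l : List ℤ} (hl : IsString l) {n a : ℤ} (ha : 0 < a)
    (hcop : IsCoprime a n) (hv : hjValue l = n / a) :
    ∃ a', 0 < a' ∧ a' < n ∧ a * a' ≡ 1 [ZMOD n] ∧ hjValue l.reverse = n / a' := by
  obtain ⟨hn, rfl⟩ := hl.hjMatrix_first_col_eq_of_hjValue_eq ha hcop.symm hv
  have hrev_n : hjMatrix l.reverse 0 0 = n := (hjMatrix_reverse_apply_zero_zero l).trans hn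
  refine ⟨hjMatrix l.reverse 1 0, hl.reverse.hjMatrix_apply_one_zero_pos,
    hrev_n ▸ (hjMatrix_apply_one_zero_bounds hl.reverse.2).2, ?_, ?_⟩
  · have hdet := det_hjMatrix l
    rw [det_fin_two] at hdet
    refine Int.modEq_iff_dvd.mpr ⟨hjMatrix l 1 1, ?_⟩
    rw [hjMatrix_reverse_apply_one_zero, ← hn]
    linear_combination -hdet
  · rw [hjValue_eq_div hl.reverse.2, hrev_n]

lemma isCoprime_of_mul_modEq_one {n a b : ℤ} (h : a * b ≡ 1 [ZMOD n]) : IsCoprime b n := by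
  obtain ⟨k, hk⟩ := Int.modEq_iff_dvd.mp h
  exact ⟨a, k, by linear_combination -hk⟩

lemma eq_sub_of_mul_modEq_one {n a a₁ a₂ : ℤ} (h₁ : a * a₁ ≡ 1 [ZMOD n])
    (h₂ : (n - a) * a₂ ≡ 1 [ZMOD n]) (ha₁ : 0 < a₁) (ha₁n : a₁ < n) (ha₂ : 0 < a₂)
    (ha₂n : a₂ < n) : a₂ = n - a₁ := by
  obtain ⟨k₁, hk₁⟩ := Int.modEq_iff_dvd.mp h₁
  obtain ⟨k₂, hk₂⟩ := Int.modEq_iff_dvd.mp h₂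
  have hdvd : n ∣ a₁ + a₂ - n := ⟨a₂ * k₁ + a₁ * k₂ + a₁ * a₂ - 1, by
    linear_combination a₂ * hk₁ + a₁ * hk₂⟩
  have := Int.eq_zero_of_abs_lt_dvd hdvd (abs_lt.mpr ⟨by omega, by omega⟩)
  omega

/-- If two strings are conjugate, then so are their reversals. -/
theorem stmt_15 (l l' : List ℤ) (hl : IsString l) (hl' : IsString l')
    (h : Conjugate l l') : Conjugate l.reverse l'.reverse := by
  obtain ⟨n, a, ha, han, hcop, hv, hv'⟩ := h
  have hcop' : IsCoprime (n - a) n := by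
    simpa [neg_add_eq_sub] using hcop.neg_left.add_mul_right_left 1
  obtain ⟨a₁, ha₁, ha₁n, hinv₁, hr⟩ := hl.exists_hjValue_reverse ha hcop hv
  obtain ⟨a₂, ha₂, ha₂n, hinv₂, hr'⟩ :=
    hl'.exists_hjValue_reverse (sub_pos.mpr han) hcop' (by exact_mod_cast hv')
  have ha₂_eq := eq_sub_of_mul_modEq_one hinv₁ hinv₂ ha₁ ha₁n ha₂ ha₂n
  refine ⟨n, a₁, ha₁, ha₁n, isCoprime_of_mul_modEq_one hinv₁, hr, ?_⟩
  rw [hr', ha₂_eq, Int.cast_sub]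
end
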